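/- arXiv:1704.00152 — 7 statements merged into one kernel-verified Lean document; each statement's English description precedes it below -/
import Mathlib

section
/- If v is a free vertex of a finite simple graph G (i.e., v belongs to exactly one maximal clique of G), then v does not belong to any cut set S of G, where a nonempty set S of vertices is a cut set if removing any vertex of S from S strictly decreases the number of connected components of the induced subgraph on the complement. -/
open SimpleGraph Finset

/-- Number of connected components of the subgraph of `G` induced on the complement of `S`. -/
noncomputable def numComp {V : Type*} [Fintype V] (G : SimpleGraph V) (S : Finset V) : ℕ :=
  Nat.card (G.induce ((↑S : Set V)ᶜ)).ConnectedComponent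

/-- `S` is a cut set of `G`: either `S = ∅`, or `S ≠ ∅` and removing any vertex of `S`
from `S` strictly decreases the number of connected components of the induced subgraph
on the complement. -/
def IsCutSet {V : Type*} [Fintype V] [DecidableEq V] (G : SimpleGraph V) (S : Finset V) : Prop :=
  S = ∅ ∨ (S ≠ ∅ ∧ ∀ i ∈ S, numComp G (S.erase i) < numComp G S)

/-! A free vertex `v` lies in a unique maximal clique, which must contain every neighbour of `v`;
so the neighbours of `v` form a clique. Adding such a vertex to a vertex set never merges two
components of the induced graph, hence `c_G(S \ {v}) ≥ c_G(S)` and `v` lies in no cut set. -/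

namespace SimpleGraph

variable {V : Type*} {G : SimpleGraph V} {v : V}

theorem isClique_neighborSet_of_existsUnique_maximal_clique [Finite V]
    (hfree : ∃! C : Set V, v ∈ C ∧ G.IsClique C ∧ ∀ D : Set V, G.IsClique D → C ⊆ D → D = C) :
    G.IsClique (G.neighborSet v) := by
  obtain ⟨C, ⟨-, hC, -⟩, hunique⟩ := hfree
  have mem_of_adj {w : V} (hw : G.Adj v w) : w ∈ C := by
    have hvw : G.IsClique {v, w} := G.isClique_pair.2 fun _ ↦ hw
    obtain ⟨M, hvwM, hM⟩ := Finite.exists_le_maximal (p := G.IsClique) hvw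
    have hMC : M = C :=
      hunique M ⟨hvwM (by simp), hM.prop, fun D hD hMD ↦ (hM.le_of_ge hD hMD).antisymm hMD⟩
    exact hMC ▸ hvwM (by simp)
  exact hC.subset fun w hw ↦ mem_of_adj hw

theorem Reachable.of_induce_insert (hv : G.IsClique (G.neighborSet v)) {s : Set V}
    {x y : s} (h : (G.induce (insert v s)).Reachable (Set.inclusion (Set.subset_insert v s) x)
      (Set.inclusion (Set.subset_insert v s) y)) :
    (G.induce s).Reachable x y := by
  classical
  obtain ⟨c, hc⟩ : ∃ c : s, ∀ w : s, G.Adj v w → c = w ∨ (G.induce s).Adj c w := by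
    by_cases hN : ∃ w : s, G.Adj v w
    · obtain ⟨c, hc⟩ := hN
      exact ⟨c, fun w hw ↦ (eq_or_ne c w).imp_right fun hcw ↦
        hv hc hw (Subtype.coe_injective.ne hcw)⟩
    · exact ⟨x, fun w hw ↦ (hN ⟨w, hw⟩).elim⟩
  -- Collapsing `v` onto `c` sends every edge to an edge or a loop.
  let r : ↥(insert v s) → s := fun u ↦ if hu : u.1 ∈ s then ⟨u, hu⟩ else c
  have hr : ∀ u : s, r (Set.inclusion (Set.subset_insert v s) u) = u := fun u ↦ dif_pos u.2
  have hr_adj : ∀ u u' : ↥(insert v s), (G.induce (insert v s)).Adj u u' →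
      Relation.ReflTransGen (G.induce s).Adj (r u) (r u') := by
    have eq_v : ∀ u : ↥(insert v s), u.1 ∉ s → u.1 = v := fun u hu ↦ u.2.resolve_right hu
    intro u u' h
    have h' : G.Adj u u' := h
    by_cases hu : u.1 ∈ s <;> by_cases hu' : u'.1 ∈ s <;>
      simp only [r, hu, hu', dite_true, dite_false]
    · exact .single h
    · obtain hcu | hcu := hc ⟨u, hu⟩ (by simpa only [eq_v u' hu'] using h'.symm)
      exacts [hcu ▸ .refl, .single hcu.symm]
    · obtain hcu | hcu := hc ⟨u', hu'⟩ (by simpa only [eq_v u hu] using h')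
      exacts [hcu ▸ .refl, .single hcu]
    · exact (h'.ne ((eq_v u hu).trans (eq_v u' hu').symm)).elim
  rw [reachable_iff_reflTransGen] at h ⊢
  simpa only [Function.onFun, hr] using h.lift' r hr_adj

theorem card_connectedComponent_induce_le_insert [Finite V] (hv : G.IsClique (G.neighborSet v))
    (s : Set V) :
    Nat.card (G.induce s).ConnectedComponent ≤
      Nat.card (G.induce (insert v s)).ConnectedComponent := by
  refine Nat.card_le_card_of_injective
    (ConnectedComponent.map (G.induceHomOfLE (Set.subset_insert v s)).toHom) ?_
  refine ConnectedComponent.ind₂ fun x y hxy ↦ ConnectedComponent.sound ?_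
  exact (ConnectedComponent.exact hxy).of_induce_insert hv

end SimpleGraph

theorem stmt0 {V : Type*} [Fintype V] [DecidableEq V] (G : SimpleGraph V) (v : V)
    (hfree : ∃! C : Set V, v ∈ C ∧ G.IsClique C ∧ ∀ D : Set V, G.IsClique D → C ⊆ D → D = C) :
    ∀ S : Finset V, IsCutSet G S → v ∉ S := by
  rintro S (rfl | ⟨-, hlt⟩) hvS
  · exact Finset.notMem_empty v hvS
  have hcompl : (↑(S.erase v) : Set V)ᶜ = insert v (↑S : Set V)ᶜ := by
    ext w
    by_cases hw : w = v <;> simp [hw, hvS]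
  have hle : numComp G S ≤ numComp G (S.erase v) := by
    rw [numComp, numComp, hcompl]
    exact card_connectedComponent_induce_le_insert
      (isClique_neighborSet_of_existsUnique_maximal_clique hfree) _
  exact (hle.not_gt (hlt v hvS)).elim
end

section
/- Let G be a connected bipartite graph with at least two vertices such that the binomial edge ideal J_G is unmixed, equivalently c_G(S) = |S| + 1 for every cut set S of G. Then G has exactly 2 leaves (vertices of degree one). -/
open SimpleGraph Finset

/-- The combinatorial condition equivalent to unmixedness of the binomial edge ideal. -/
def Unmixed {V : Type*} [Fintype V] [DecidableEq V] (G : SimpleGraph V) : Prop :=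
  ∀ S : Finset V, IsCutSet G S → numComp G S = S.card + 1

/-!
Let `A ⊔ B` be the bipartition and `S` the set of non-leaves in `A`. Since `G` has no isolated
vertex, removing `S` leaves exactly one star around each vertex of `B`, and every vertex of `S`,
having two neighbours in `B`, joins two of these stars when put back. So `S` is a cut set with
`c(S) = |B|`, and unmixedness gives `|B| = |S| + 1`. Doing this for both sides and adding,
`|V| = (number of non-leaves) + 2`, i.e. there are exactly two leaves.
-/

namespace SimpleGraph

variable {V : Type*} {G : SimpleGraph V}

lemma Reachable.eq_of_forall_adj {β : Sort*} {f : V → β} (hf : ∀ x y, G.Adj x y → f x = f y)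
    {u v : V} (h : G.Reachable u v) : f u = f v := by
  obtain ⟨p⟩ := h
  induction p with
  | nil => rfl
  | cons hadj _ ih => exact (hf _ _ hadj).trans ih

end SimpleGraph

section ComponentCount

variable {V : Type*} (G : SimpleGraph V) {T B : Finset V}

def componentOf (hBT : Disjoint B T) (b : ↥B) : (G.induce (↑T : Set V)ᶜ).ConnectedComponent :=
  (G.induce _).connectedComponentMk ⟨b, Finset.disjoint_left.mp hBT b.2⟩

variable {G}

lemma componentOf_surjective (hBT : Disjoint B T) (hdom : ∀ x ∉ B, ∃ b ∈ B, G.Adj x b) :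
    Function.Surjective (componentOf G hBT) := by
  intro c
  obtain ⟨⟨x, hxT⟩, rfl⟩ := c.exists_rep
  by_cases hxB : x ∈ B
  · exact ⟨⟨x, hxB⟩, rfl⟩
  · obtain ⟨b, hb, hxb⟩ := hdom x hxB
    exact ⟨⟨b, hb⟩, ConnectedComponent.sound (Adj.reachable (G := G.induce _) hxb.symm)⟩

lemma numComp_eq_card_of_injective [Fintype V] (hBT : Disjoint B T)
    (hdom : ∀ x ∉ B, ∃ b ∈ B, G.Adj x b) (hinj : Function.Injective (componentOf G hBT)) :
    numComp G T = #B := by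
  simpa [numComp] using (Nat.card_eq_of_bijective _ ⟨hinj, componentOf_surjective hBT hdom⟩).symm

lemma numComp_lt_card_of_not_injective [Fintype V] (hBT : Disjoint B T)
    (hdom : ∀ x ∉ B, ∃ b ∈ B, G.Adj x b) (hinj : ¬ Function.Injective (componentOf G hBT)) :
    numComp G T < #B := by
  have hsurj := componentOf_surjective hBT hdom
  have hle : numComp G T ≤ #B := by simpa [numComp] using Nat.card_le_card_of_surjective _ hsurj
  refine hle.lt_of_ne fun heq => hinj ((Nat.bijective_iff_surjective_and_card _).mpr ⟨hsurj, ?_⟩).1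
  simpa [numComp] using heq.symm

lemma componentOf_injective_of_stars (hBT : Disjoint B T) (hB : ∀ a ∈ B, ∀ b ∈ B, ¬ G.Adj a b)
    (hdom : ∀ x ∉ B, ∃ b ∈ B, G.Adj x b)
    (hleaf : ∀ x ∉ T, x ∉ B → ∀ y z, G.Adj x y → G.Adj x z → y = z) :
    Function.Injective (componentOf G hBT) := by
  classical
  choose! f hfB hfadj using hdom
  let r : V → V := fun x => if x ∈ B then x else f x
  have hr : ∀ x y, (G.induce (↑T : Set V)ᶜ).Adj x y → r x = r y := by
    rintro ⟨x, hxT⟩ ⟨y, hyT⟩ hxy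
    simp only [comap_adj, Function.Embedding.subtype_apply] at hxy
    by_cases hx : x ∈ B <;> by_cases hy : y ∈ B <;> simp only [r, hx, hy, if_true, if_false]
    · exact absurd hxy (hB x hx y hy)
    · exact (hleaf y (by simpa using hyT) hy _ _ (hfadj y hy) hxy.symm).symm
    · exact hleaf x (by simpa using hxT) hx _ _ (hfadj x hx) hxy
    · exact absurd (hleaf x (by simpa using hxT) hx _ _ (hfadj x hx) hxy ▸ hfB x hx) hy
  intro a b hab
  simpa [r] using (ConnectedComponent.exact hab).eq_of_forall_adj hr

lemma componentOf_not_injective_of_adj (hBT : Disjoint B T) {i a b : V} (hi : i ∉ T)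
    (ha : a ∈ B) (hb : b ∈ B) (hab : a ≠ b) (hia : G.Adj i a) (hib : G.Adj i b) :
    ¬ Function.Injective (componentOf G hBT) := by
  intro hinj
  let H := G.induce (↑T : Set V)ᶜ
  let vtx : ∀ x : V, x ∉ T → ↥(↑T : Set V)ᶜ := fun x hx => ⟨x, by simpa using hx⟩
  have hia' : H.Adj (vtx i hi) (vtx a (Finset.disjoint_left.mp hBT ha)) := hia
  have hib' : H.Adj (vtx i hi) (vtx b (Finset.disjoint_left.mp hBT hb)) := hib
  have hsame := ConnectedComponent.sound (hia'.reachable.symm.trans hib'.reachable)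
  exact hab (congrArg Subtype.val (hinj (a₁ := ⟨a, ha⟩) (a₂ := ⟨b, hb⟩) hsame))

end ComponentCount

section Bipartite

variable {V : Type*} [Fintype V] [DecidableEq V] {G : SimpleGraph V} [DecidableRel G.Adj]

lemma Unmixed.card_eq_card_filter_degree_ne_one_add_one (hunmixed : Unmixed G)
    (hdeg : ∀ x, 0 < G.degree x) {A B : Finset V} (hdisj : Disjoint A B)
    (hcover : A ∪ B = univ) (hbip : ∀ a b, G.Adj a b → (a ∈ A ∧ b ∈ B) ∨ (a ∈ B ∧ b ∈ A)) :
    #B = #(A.filter fun w => G.degree w ≠ 1) + 1 := by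
  set S := A.filter fun w => G.degree w ≠ 1
  have hA : ∀ x ∉ B, x ∈ A := fun x hx =>
    (mem_union.mp (hcover.symm ▸ mem_univ x : x ∈ A ∪ B)).resolve_right hx
  have hAB : ∀ a b, G.Adj a b → a ∈ A → b ∈ B := fun a b h ha => by
    rcases hbip a b h with ⟨-, hb⟩ | ⟨hb, -⟩
    exacts [hb, absurd hb (disjoint_left.mp hdisj ha)]
  have hB : ∀ a ∈ B, ∀ b ∈ B, ¬ G.Adj a b := fun a ha b hb h => by
    rcases hbip a b h with ⟨ha', -⟩ | ⟨-, hb'⟩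
    exacts [disjoint_left.mp hdisj ha' ha, disjoint_left.mp hdisj hb' hb]
  have hdom : ∀ x ∉ B, ∃ b ∈ B, G.Adj x b := fun x hx => by
    obtain ⟨b, hxb⟩ := (G.degree_pos_iff_exists_adj x).mp (hdeg x)
    exact ⟨b, hAB x b hxb (hA x hx), hxb⟩
  have hBS : Disjoint B S := disjoint_of_subset_right (filter_subset _ _) hdisj.symm
  have hleaf : ∀ x ∉ S, x ∉ B → ∀ y z, G.Adj x y → G.Adj x z → y = z := by
    intro x hxS hxB y z hy hz
    have hdeg1 : #(G.neighborFinset x) ≤ 1 := by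
      by_contra h
      exact hxS (mem_filter.mpr ⟨hA x hxB, by rw [← card_neighborFinset_eq_degree]; omega⟩)
    exact card_le_one.mp hdeg1 y (by simpa using hy) z (by simpa using hz)
  have hcount : numComp G S = #B := numComp_eq_card_of_injective hBS hdom
    (componentOf_injective_of_stars hBS hB hdom hleaf)
  have hcut : IsCutSet G S := by
    refine (eq_or_ne S ∅).imp id fun hne => ⟨hne, fun i hi => hcount ▸ ?_⟩
    obtain ⟨hiA, hi1⟩ := mem_filter.mp hi
    have htwo : 1 < #(G.neighborFinset i) := by
      rw [card_neighborFinset_eq_degree]; have := hdeg i; omega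
    obtain ⟨a, ha, b, hb, hab⟩ := one_lt_card.mp htwo
    rw [mem_neighborFinset] at ha hb
    have hBS' : Disjoint B (S.erase i) := disjoint_of_subset_right (erase_subset _ _) hBS
    exact numComp_lt_card_of_not_injective hBS' hdom <| componentOf_not_injective_of_adj hBS'
      (notMem_erase i S) (hAB i a ha hiA) (hAB i b hb hiA) hab ha hb
  rw [← hcount]
  exact hunmixed S hcut

end Bipartite

theorem stmt1 {V : Type*} [Fintype V] [DecidableEq V] (G : SimpleGraph V)
    [DecidableRel G.Adj] (hconn : G.Connected)
    (V1 V2 : Finset V) (hdisj : Disjoint V1 V2) (hcover : V1 ∪ V2 = Finset.univ)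
    (hne1 : V1.Nonempty) (hne2 : V2.Nonempty)
    (hbip : ∀ a b, G.Adj a b → (a ∈ V1 ∧ b ∈ V2) ∨ (a ∈ V2 ∧ b ∈ V1))
    (hunmixed : Unmixed G) :
    (Finset.univ.filter (fun w => G.degree w = 1)).card = 2 := by
  obtain ⟨a, ha⟩ := hne1
  obtain ⟨b, hb⟩ := hne2
  have : Nontrivial V := nontrivial_of_ne a b (disjoint_left.mp hdisj ha <| · ▸ hb)
  have hdeg : ∀ x, 0 < G.degree x := fun x => hconn.preconnected.degree_pos_of_nontrivial x
  have h2 := hunmixed.card_eq_card_filter_degree_ne_one_add_one hdeg hdisj hcover hbip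
  have h1 := hunmixed.card_eq_card_filter_degree_ne_one_add_one hdeg hdisj.symm
    (union_comm V1 V2 ▸ hcover) fun a b h => (hbip a b h).symm
  have hsplit : #(univ.filter fun w => G.degree w = 1)
      = #(V1.filter fun w => G.degree w = 1) + #(V2.filter fun w => G.degree w = 1) := by
    rw [← hcover, filter_union, card_union_of_disjoint (disjoint_filter_filter hdisj)]
  have hV1 := card_filter_add_card_filter_not (s := V1) (fun w => G.degree w = 1)
  have hV2 := card_filter_add_card_filter_not (s := V2) (fun w => G.degree w = 1)
  simp only [ne_eq] at h1 h2
  omega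
end

section
/- Let G be a connected bipartite graph with bipartition V_1 ⊔ V_2 satisfying c_G(S) = |S| + 1 for every cut set S. Then either each bipartition set contains exactly one leaf and |V_1| = |V_2|, or both leaves lie in the same bipartition set, say V_1, and |V_1| = |V_2| + 1. -/
open SimpleGraph Finset

section Helpers

variable {V : Type*} [Fintype V] [DecidableEq V] {G : SimpleGraph V} [DecidableRel G.Adj]

omit [DecidableEq V] in
lemma eq_of_deg_one {v a b : V} (h : G.degree v = 1) (ha : G.Adj v a) (hb : G.Adj v b) :
    a = b :=
  Finset.card_le_one.mp (le_of_eq h) a (by simpa using ha) b (by simpa using hb)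

omit [DecidableEq V] in
lemma walk_prop {V1 V2 : Finset V} (hdisj : Disjoint V1 V2)
    (hbip : ∀ a b, G.Adj a b → (a ∈ V1 ∧ b ∈ V2) ∨ (a ∈ V2 ∧ b ∈ V1))
    (T : Set V) (hleaf : ∀ x, x ∈ T → x ∈ V2 → G.degree x = 1)
    {v : V} (hv1 : v ∈ V1) {a b : ↥T} (p : (G.induce T).Walk a b)
    (ha : (a : V) = v ∨ ((a : V) ∈ V2 ∧ G.Adj v a)) :
    (b : V) = v ∨ ((b : V) ∈ V2 ∧ G.Adj v b) := by
  induction p with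
  | nil => exact ha
  | @cons a c b hac p ih =>
    apply ih
    have hadj : G.Adj (a : V) (c : V) := hac
    rcases ha with h | ⟨ha2, hva⟩
    · rcases hbip v (c : V) (h ▸ hadj) with ⟨_, hc2⟩ | ⟨hv2, _⟩
      · exact Or.inr ⟨hc2, h ▸ hadj⟩
      · exact absurd hv2 (Finset.disjoint_left.mp hdisj hv1)
    · have hdeg := hleaf _ a.2 ha2
      exact Or.inl (eq_of_deg_one hdeg hadj hva.symm)

omit [DecidableEq V] in
lemma walk_prop_univ {V1 V2 : Finset V} (hdisj : Disjoint V1 V2)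
    (hbip : ∀ a b, G.Adj a b → (a ∈ V1 ∧ b ∈ V2) ∨ (a ∈ V2 ∧ b ∈ V1))
    (hleaf : ∀ x ∈ V2, G.degree x = 1)
    {v : V} (hv1 : v ∈ V1) {a b : V} (p : G.Walk a b)
    (ha : a = v ∨ (a ∈ V2 ∧ G.Adj v a)) : b = v ∨ (b ∈ V2 ∧ G.Adj v b) := by
  induction p with
  | nil => exact ha
  | @cons a c b hac p ih =>
    apply ih
    rcases ha with h | ⟨ha2, hva⟩
    · rcases hbip v c (h ▸ hac) with ⟨_, hc2⟩ | ⟨hv2, _⟩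
      · exact Or.inr ⟨hc2, h ▸ hac⟩
      · exact absurd hv2 (Finset.disjoint_left.mp hdisj hv1)
    · exact Or.inl (eq_of_deg_one (hleaf _ ha2) hac hva.symm)

omit [DecidableEq V] in
lemma walk_two {v1 u : V} (hdeg1 : G.degree v1 = 1) (hdegu : G.degree u = 1)
    (hadj : G.Adj v1 u) {a b : V} (p : G.Walk a b) (ha : a = v1 ∨ a = u) :
    b = v1 ∨ b = u := by
  induction p with
  | nil => exact ha
  | @cons a c b hac p ih =>
    apply ih
    rcases ha with h | h
    · exact Or.inr (eq_of_deg_one hdeg1 (h ▸ hac) hadj)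
    · exact Or.inl (eq_of_deg_one hdegu (h ▸ hac) hadj.symm)

lemma card_comp_eq {V1 V2 : Finset V} (hdisj : Disjoint V1 V2)
    (hcover : V1 ∪ V2 = Finset.univ)
    (hbip : ∀ a b, G.Adj a b → (a ∈ V1 ∧ b ∈ V2) ∨ (a ∈ V2 ∧ b ∈ V1))
    (T : Set V) (hT1 : ∀ x ∈ V1, x ∈ T)
    (hleaf : ∀ x, x ∈ T → x ∈ V2 → G.degree x = 1) :
    Nat.card (G.induce T).ConnectedComponent = V1.card := by
  have hf : Function.Bijective (fun v : {x // x ∈ V1} =>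
      (G.induce T).connectedComponentMk ⟨v.1, hT1 v.1 v.2⟩) := by
    constructor
    · rintro ⟨v, hv⟩ ⟨w, hw⟩ h
      obtain ⟨p⟩ := (SimpleGraph.ConnectedComponent.eq).mp h
      rcases walk_prop hdisj hbip T hleaf hv p (Or.inl rfl) with h1 | ⟨h2, _⟩
      · exact Subtype.ext h1.symm
      · exact absurd h2 (Finset.disjoint_left.mp hdisj hw)
    · intro c
      obtain ⟨w, rfl⟩ := c.exists_rep
      by_cases hw1 : (w : V) ∈ V1
      · exact ⟨⟨w, hw1⟩, by rfl⟩
      · have hw2 : (w : V) ∈ V2 := by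
          have := Finset.mem_univ (w : V)
          rw [← hcover, Finset.mem_union] at this
          tauto
        have hdeg := hleaf _ w.2 hw2
        have hpos : 0 < G.degree (w : V) := by omega
        obtain ⟨u, hu⟩ := (G.degree_pos_iff_exists_adj _).mp hpos
        have hu1 : u ∈ V1 := by
          rcases hbip _ u hu with ⟨h1, _⟩ | ⟨_, h2⟩
          · exact absurd h1 hw1
          · exact h2
        refine ⟨⟨u, hu1⟩, ?_⟩
        refine SimpleGraph.ConnectedComponent.sound (SimpleGraph.Adj.reachable ?_)
        show (G.induce T).Adj ⟨u, hT1 _ hu1⟩ w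
        exact hu.symm
  rw [← Nat.card_eq_of_bijective _ hf, Nat.card_eq_fintype_card, Fintype.card_coe]

lemma card_comp_lt {V1 V2 : Finset V} (hdisj : Disjoint V1 V2)
    (hcover : V1 ∪ V2 = Finset.univ)
    (hbip : ∀ a b, G.Adj a b → (a ∈ V1 ∧ b ∈ V2) ∨ (a ∈ V2 ∧ b ∈ V1))
    (T : Set V) (hT1 : ∀ x ∈ V1, x ∈ T)
    {i u1 u2 : V} (hi2 : i ∈ V2) (hiT : i ∈ T) (h1 : G.Adj i u1) (h2 : G.Adj i u2)
    (hu : u1 ≠ u2)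
    (hleaf : ∀ x, x ∈ T → x ∈ V2 → x ≠ i → G.degree x = 1) :
    Nat.card (G.induce T).ConnectedComponent < V1.card := by
  have hnV1 : ∀ {y : V}, G.Adj i y → y ∈ V1 := by
    intro y hy
    rcases hbip i y hy with ⟨hi1, _⟩ | ⟨_, hy1⟩
    · exact absurd hi2 (Finset.disjoint_left.mp hdisj hi1)
    · exact hy1
  have hu1 : u1 ∈ V1 := hnV1 h1
  have hu2 : u2 ∈ V1 := hnV1 h2
  have hadj2i : (G.induce T).Adj ⟨u2, hT1 _ hu2⟩ ⟨i, hiT⟩ := by exact h2.symm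
  have hadji1 : (G.induce T).Adj ⟨i, hiT⟩ ⟨u1, hT1 _ hu1⟩ := by exact h1
  have hreach21 : (G.induce T).Reachable ⟨u2, hT1 _ hu2⟩ ⟨u1, hT1 _ hu1⟩ :=
    hadj2i.reachable.trans hadji1.reachable
  have hsurj : Function.Surjective (fun v : {x // x ∈ V1.erase u2} =>
      (G.induce T).connectedComponentMk ⟨v.1, hT1 v.1 (Finset.mem_of_mem_erase v.2)⟩) := by
    intro c
    obtain ⟨w, rfl⟩ := c.exists_rep
    have key : ∀ (y : V) (hy : y ∈ V1), ∃ v : {x // x ∈ V1.erase u2},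
        (G.induce T).connectedComponentMk ⟨v.1, hT1 v.1 (Finset.mem_of_mem_erase v.2)⟩
          = (G.induce T).connectedComponentMk ⟨y, hT1 y hy⟩ := by
      intro y hy
      by_cases hyu : y = u2
      · refine ⟨⟨u1, Finset.mem_erase.mpr ⟨hu, hu1⟩⟩, ?_⟩
        subst hyu
        exact SimpleGraph.ConnectedComponent.sound hreach21.symm
      · exact ⟨⟨y, Finset.mem_erase.mpr ⟨hyu, hy⟩⟩, rfl⟩
    by_cases hw1 : (w : V) ∈ V1
    · obtain ⟨v, hv⟩ := key _ hw1
      exact ⟨v, hv⟩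
    · have hw2 : (w : V) ∈ V2 := by
        have := Finset.mem_univ (w : V)
        rw [← hcover, Finset.mem_union] at this
        tauto
      by_cases hwi : (w : V) = i
      · obtain ⟨v, hv⟩ := key _ hu1
        refine ⟨v, hv.trans ?_⟩
        refine SimpleGraph.ConnectedComponent.sound (SimpleGraph.Adj.reachable ?_)
        show (G.induce T).Adj ⟨u1, hT1 _ hu1⟩ w
        show G.Adj u1 (w : V)
        rw [hwi]; exact h1.symm
      · have hdeg := hleaf _ w.2 hw2 hwi
        have hpos : 0 < G.degree (w : V) := by omega
        obtain ⟨u, huadj⟩ := (G.degree_pos_iff_exists_adj _).mp hpos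
        have huV1 : u ∈ V1 := by
          rcases hbip _ u huadj with ⟨hh, _⟩ | ⟨_, hh⟩
          · exact absurd hh hw1
          · exact hh
        obtain ⟨v, hv⟩ := key _ huV1
        refine ⟨v, hv.trans ?_⟩
        refine SimpleGraph.ConnectedComponent.sound (SimpleGraph.Adj.reachable ?_)
        show (G.induce T).Adj ⟨u, hT1 _ huV1⟩ w
        exact huadj.symm
  have hle : Nat.card (G.induce T).ConnectedComponent ≤ (V1.erase u2).card := by
    have := Nat.card_le_card_of_surjective _ hsurj
    rwa [Nat.card_eq_fintype_card (α := {x // x ∈ V1.erase u2}), Fintype.card_coe] at this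
  have : (V1.erase u2).card < V1.card := Finset.card_erase_lt_of_mem hu2
  omega

lemma main_lemma (hconn : G.Connected) {V1 V2 : Finset V} (hdisj : Disjoint V1 V2)
    (hcover : V1 ∪ V2 = Finset.univ) (hne1 : V1.Nonempty)
    (hbip : ∀ a b, G.Adj a b → (a ∈ V1 ∧ b ∈ V2) ∨ (a ∈ V2 ∧ b ∈ V1))
    (hunmixed : Unmixed G)
    (hS : (V2.filter fun w => ¬ G.degree w = 1).Nonempty) :
    V1.card = (V2.filter fun w => ¬ G.degree w = 1).card + 1 := by
  set S := V2.filter fun w => ¬ G.degree w = 1 with hSdef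
  have hSsub : ∀ x ∈ S, x ∈ V2 ∧ ¬ G.degree x = 1 := fun x hx =>
    Finset.mem_filter.mp hx |>.imp id id
  have hT1 : ∀ x ∈ V1, x ∈ ((↑S : Set V)ᶜ) := by
    intro x hx
    simp only [Set.mem_compl_iff, Finset.mem_coe]
    intro hxS
    exact Finset.disjoint_left.mp hdisj hx (hSsub x hxS).1
  have hleafS : ∀ x, x ∈ ((↑S : Set V)ᶜ) → x ∈ V2 → G.degree x = 1 := by
    intro x hxT hx2
    by_contra hd
    exact hxT (by simpa [hSdef, Finset.mem_filter] using ⟨hx2, hd⟩)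
  have hA : numComp G S = V1.card :=
    card_comp_eq hdisj hcover hbip _ hT1 hleafS
  have hcut : IsCutSet G S := by
    right
    refine ⟨Finset.nonempty_iff_ne_empty.mp hS, ?_⟩
    intro i hi
    obtain ⟨hi2, hideg⟩ := hSsub i hi
    obtain ⟨v1, hv1⟩ := hne1
    have hvne : v1 ≠ i := fun h => Finset.disjoint_left.mp hdisj hv1 (h ▸ hi2)
    obtain ⟨w0, hw0⟩ : ∃ w, G.Adj i w := by
      obtain ⟨p⟩ := hconn i v1
      cases p with
      | nil => exact absurd rfl hvne.symm
      | cons h _ => exact ⟨_, h⟩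
    have hpos : 0 < G.degree i := (G.degree_pos_iff_exists_adj i).mpr ⟨w0, hw0⟩
    have h2deg : 1 < G.degree i := by omega
    obtain ⟨u1, hu1, u2, hu2, hu12⟩ := Finset.one_lt_card.mp h2deg
    rw [SimpleGraph.mem_neighborFinset] at hu1 hu2
    have hT1' : ∀ x ∈ V1, x ∈ ((↑(S.erase i) : Set V)ᶜ) := by
      intro x hx
      simp only [Set.mem_compl_iff, Finset.mem_coe]
      intro hxS
      exact Finset.disjoint_left.mp hdisj hx (hSsub x (Finset.mem_of_mem_erase hxS)).1
    have hiT : i ∈ ((↑(S.erase i) : Set V)ᶜ) := by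
      simp [Set.mem_compl_iff]
    have hleaf' : ∀ x, x ∈ ((↑(S.erase i) : Set V)ᶜ) → x ∈ V2 → x ≠ i → G.degree x = 1 := by
      intro x hxT hx2 hxi
      by_contra hd
      exact hxT (Finset.mem_coe.mpr (Finset.mem_erase.mpr ⟨hxi, Finset.mem_filter.mpr ⟨hx2, hd⟩⟩))
    have hB : numComp G (S.erase i) < V1.card :=
      card_comp_lt hdisj hcover hbip _ hT1' hi2 hiT hu1 hu2 hu12 hleaf'
    rw [hA]
    exact hB
  have := hunmixed S hcut
  omega

end Helpers

theorem stmt2 {V : Type*} [Fintype V] [DecidableEq V] (G : SimpleGraph V)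
    [DecidableRel G.Adj] (hconn : G.Connected)
    (V1 V2 : Finset V) (hdisj : Disjoint V1 V2) (hcover : V1 ∪ V2 = Finset.univ)
    (hne1 : V1.Nonempty) (hne2 : V2.Nonempty)
    (hbip : ∀ a b, G.Adj a b → (a ∈ V1 ∧ b ∈ V2) ∨ (a ∈ V2 ∧ b ∈ V1))
    (hunmixed : Unmixed G) :
    letI L := Finset.univ.filter (fun w => G.degree w = 1)
    ((L ∩ V1).card = 1 ∧ (L ∩ V2).card = 1 ∧ V1.card = V2.card) ∨
    (L ⊆ V1 ∧ V1.card = V2.card + 1) ∨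
    (L ⊆ V2 ∧ V2.card = V1.card + 1) := by
  set L := Finset.univ.filter (fun w => G.degree w = 1) with hLdef
  have hLmem : ∀ w, w ∈ L ↔ G.degree w = 1 := by
    intro w
    simp [hLdef, Finset.mem_filter]
  have hbip' : ∀ a b, G.Adj a b → (a ∈ V2 ∧ b ∈ V1) ∨ (a ∈ V1 ∧ b ∈ V2) :=
    fun a b h => (hbip a b h).symm
  have hcover' : V2 ∪ V1 = Finset.univ := by rw [Finset.union_comm]; exact hcover
  have hmemV : ∀ w : V, w ∈ V1 ∨ w ∈ V2 := by
    intro w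
    have := Finset.mem_univ w
    rw [← hcover, Finset.mem_union] at this
    exact this
  have hLV1 : L ∩ V1 = V1.filter (fun w => G.degree w = 1) := by
    ext w
    simp only [Finset.mem_inter, Finset.mem_filter, hLmem]
    tauto
  have hLV2 : L ∩ V2 = V2.filter (fun w => G.degree w = 1) := by
    ext w
    simp only [Finset.mem_inter, Finset.mem_filter, hLmem]
    tauto
  have f1 : (V1.filter (fun w => G.degree w = 1)).card
      + (V1.filter (fun w => ¬ G.degree w = 1)).card = V1.card :=
    Finset.card_filter_add_card_filter_not _
  have f2 : (V2.filter (fun w => G.degree w = 1)).card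
      + (V2.filter (fun w => ¬ G.degree w = 1)).card = V2.card :=
    Finset.card_filter_add_card_filter_not _
  by_cases hb : (V2.filter fun w => ¬ G.degree w = 1).Nonempty
  · by_cases ha : (V1.filter fun w => ¬ G.degree w = 1).Nonempty
    · -- both parts have non-leaf vertices
      have e1 := main_lemma hconn hdisj hcover hne1 hbip hunmixed hb
      have e2 := main_lemma hconn hdisj.symm hcover' hne2 hbip' hunmixed ha
      have hsum : (V1.filter (fun w => G.degree w = 1)).card
          + (V2.filter (fun w => G.degree w = 1)).card = 2 := by omega
      have h3 : (V1.filter (fun w => G.degree w = 1)).card = 0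
          ∨ (V1.filter (fun w => G.degree w = 1)).card = 1
          ∨ (V1.filter (fun w => G.degree w = 1)).card = 2 := by omega
      rcases h3 with h0 | h1 | h2
      · -- no leaves in V1
        refine Or.inr (Or.inr ⟨?_, by omega⟩)
        intro w hw
        rcases hmemV w with hw1 | hw2
        · exfalso
          have : w ∈ V1.filter (fun w => G.degree w = 1) :=
            Finset.mem_filter.mpr ⟨hw1, (hLmem w).mp hw⟩
          rw [Finset.card_eq_zero.mp h0] at this
          exact absurd this (Finset.notMem_empty w)
        · exact hw2
      · refine Or.inl ⟨by rw [hLV1]; exact h1, by rw [hLV2]; omega, by omega⟩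
      · -- no leaves in V2
        refine Or.inr (Or.inl ⟨?_, by omega⟩)
        intro w hw
        rcases hmemV w with hw1 | hw2
        · exact hw1
        · exfalso
          have : w ∈ V2.filter (fun w => G.degree w = 1) :=
            Finset.mem_filter.mpr ⟨hw2, (hLmem w).mp hw⟩
          have hc2 : (V2.filter (fun w => G.degree w = 1)).card = 0 := by omega
          rw [Finset.card_eq_zero.mp hc2] at this
          exact absurd this (Finset.notMem_empty w)
    · -- every vertex of V1 is a leaf, V2 has a non-leaf v : then V2 = {v}
      have hleafV1 : ∀ x ∈ V1, G.degree x = 1 := by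
        intro x hx
        by_contra hd
        exact ha ⟨x, Finset.mem_filter.mpr ⟨hx, hd⟩⟩
      obtain ⟨v, hv⟩ := id hb
      obtain ⟨hv2, hvdeg⟩ := Finset.mem_filter.mp hv
      have hV2v : V2 = {v} := by
        ext w
        simp only [Finset.mem_singleton]
        constructor
        · intro hw2
          obtain ⟨p⟩ := hconn v w
          rcases walk_prop_univ hdisj.symm hbip' hleafV1 hv2 p (Or.inl rfl) with h | ⟨h1, _⟩
          · exact h
          · exact absurd hw2 (Finset.disjoint_left.mp hdisj h1)
        · intro h
          exact h ▸ hv2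
      have hN2 : (V2.filter fun w => ¬ G.degree w = 1) = {v} := by
        rw [hV2v]
        rw [Finset.filter_singleton]
        simp [hvdeg]
      have e1 := main_lemma hconn hdisj hcover hne1 hbip hunmixed hb
      rw [hN2] at e1
      simp only [Finset.card_singleton] at e1
      refine Or.inr (Or.inl ⟨?_, by rw [hV2v]; simpa using e1⟩)
      intro w hw
      rcases hmemV w with hw1 | hw2
      · exact hw1
      · exfalso
        rw [hV2v, Finset.mem_singleton] at hw2
        exact hvdeg (hw2 ▸ (hLmem w).mp hw)
  · by_cases ha : (V1.filter fun w => ¬ G.degree w = 1).Nonempty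
    · -- every vertex of V2 is a leaf, V1 has a non-leaf v : then V1 = {v}
      have hleafV2 : ∀ x ∈ V2, G.degree x = 1 := by
        intro x hx
        by_contra hd
        exact hb ⟨x, Finset.mem_filter.mpr ⟨hx, hd⟩⟩
      obtain ⟨v, hv⟩ := id ha
      obtain ⟨hv1, hvdeg⟩ := Finset.mem_filter.mp hv
      have hV1v : V1 = {v} := by
        ext w
        simp only [Finset.mem_singleton]
        constructor
        · intro hw1
          obtain ⟨p⟩ := hconn v w
          rcases walk_prop_univ hdisj hbip hleafV2 hv1 p (Or.inl rfl) with h | ⟨h1, _⟩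
          · exact h
          · exact absurd h1 (Finset.disjoint_left.mp hdisj hw1)
        · intro h
          exact h ▸ hv1
      have hN1 : (V1.filter fun w => ¬ G.degree w = 1) = {v} := by
        rw [hV1v]
        rw [Finset.filter_singleton]
        simp [hvdeg]
      have e2 := main_lemma hconn hdisj.symm hcover' hne2 hbip' hunmixed ha
      rw [hN1] at e2
      simp only [Finset.card_singleton] at e2
      refine Or.inr (Or.inr ⟨?_, by rw [hV1v]; simpa using e2⟩)
      intro w hw
      rcases hmemV w with hw1 | hw2
      · exfalso
        rw [hV1v, Finset.mem_singleton] at hw1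
        exact hvdeg (hw1 ▸ (hLmem w).mp hw)
      · exact hw2
    · -- all vertices are leaves : G is a single edge
      have hleafV1 : ∀ x ∈ V1, G.degree x = 1 := by
        intro x hx
        by_contra hd
        exact ha ⟨x, Finset.mem_filter.mpr ⟨hx, hd⟩⟩
      have hleafV2 : ∀ x ∈ V2, G.degree x = 1 := by
        intro x hx
        by_contra hd
        exact hb ⟨x, Finset.mem_filter.mpr ⟨hx, hd⟩⟩
      have hleafAll : ∀ x : V, G.degree x = 1 := by
        intro x
        rcases hmemV x with h | h
        · exact hleafV1 x h
        · exact hleafV2 x h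
      obtain ⟨v1, hv1⟩ := hne1
      have hd1 : G.degree v1 = 1 := hleafV1 v1 hv1
      obtain ⟨u, hu⟩ := (G.degree_pos_iff_exists_adj v1).mp (by omega)
      have hu2 : u ∈ V2 := by
        rcases hbip v1 u hu with ⟨_, h⟩ | ⟨h, _⟩
        · exact h
        · exact absurd h (Finset.disjoint_left.mp hdisj hv1)
      have hdu : G.degree u = 1 := hleafV2 u hu2
      have htwo : ∀ x : V, x = v1 ∨ x = u := by
        intro x
        obtain ⟨p⟩ := hconn v1 x
        exact walk_two hd1 hdu hu p (Or.inl rfl)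
      have hV1 : V1 = {v1} := by
        ext w
        simp only [Finset.mem_singleton]
        constructor
        · intro hw
          rcases htwo w with h | h
          · exact h
          · exact absurd hu2 (Finset.disjoint_left.mp hdisj (h ▸ hw))
        · intro h; exact h ▸ hv1
      have hV2 : V2 = {u} := by
        ext w
        simp only [Finset.mem_singleton]
        constructor
        · intro hw
          rcases htwo w with h | h
          · exact absurd hw (by rw [h]; exact Finset.disjoint_left.mp hdisj hv1)
          · exact h
        · intro h; exact h ▸ hu2
      refine Or.inl ⟨?_, ?_, by rw [hV1, hV2, Finset.card_singleton, Finset.card_singleton]⟩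
      · have : L ∩ V1 = {v1} := by
          ext w
          simp only [Finset.mem_inter, Finset.mem_singleton, hLmem, hV1, hleafAll, true_and]
        rw [this]; rfl
      · have : L ∩ V2 = {u} := by
          ext w
          simp only [Finset.mem_inter, Finset.mem_singleton, hLmem, hV2, hleafAll, true_and]
        rw [this]; rfl
end

section
/- Let G be a connected bipartite graph with at least 4 vertices satisfying c_G(S) = |S| + 1 for every cut set S of G. Then the two leaves of G are not adjacent to the same vertex; consequently G has at least two distinct cut vertices, namely the neighbours of the two leaves. -/
open SimpleGraph Finset

lemma reachable_eq_of_isolated {W : Type*} {H : SimpleGraph W} {v u : W}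
    (hv : ∀ x, ¬ H.Adj v x) (h : H.Reachable v u) : u = v := by
  obtain ⟨p⟩ := h
  cases p with
  | nil => rfl
  | cons h _ => exact absurd h (hv _)

lemma numComp_empty {V : Type*} [Fintype V] (G : SimpleGraph V) (h : G.Connected) :
    numComp G (∅ : Finset V) = 1 := by
  unfold numComp
  have he : ((↑(∅ : Finset V) : Set V)ᶜ) = Set.univ := by simp
  rw [he]
  have hc : (G.induce (Set.univ : Set V)).Connected :=
    ((induceUnivIso G).connected_iff).mpr h
  have := hc.preconnected.subsingleton_connectedComponent
  have hne : Nonempty (G.induce (Set.univ : Set V)).ConnectedComponent :=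
    ⟨SimpleGraph.connectedComponentMk _ ⟨h.nonempty.some, trivial⟩⟩
  exact Nat.card_eq_one_iff_unique.mpr ⟨this, hne⟩

section main
variable {V : Type*} [Fintype V] [DecidableEq V] (G : SimpleGraph V) [DecidableRel G.Adj]

/-- a leaf is isolated in the induced graph once its neighbour is removed -/
lemma leaf_isolated (S : Finset V) {f w : V} (hadj : G.Adj f w) (hdeg : G.degree f = 1)
    (hwS : w ∈ S) (hf : f ∈ ((↑S : Set V)ᶜ)) :
    ∀ x, ¬ (G.induce ((↑S : Set V)ᶜ)).Adj ⟨f, hf⟩ x := by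
  intro x hx
  have hn : G.neighborFinset f = {w} := by
    obtain ⟨a, ha⟩ := Finset.card_eq_one.mp hdeg
    have hw : w ∈ G.neighborFinset f := (SimpleGraph.mem_neighborFinset _ _ _).mpr hadj
    rw [ha] at hw ⊢
    rw [Finset.mem_singleton] at hw
    rw [hw]
  have hxw : (↑x : V) = w := by
    have : (↑x : V) ∈ G.neighborFinset f := (SimpleGraph.mem_neighborFinset _ _ _).mpr hx
    rw [hn, Finset.mem_singleton] at this
    exact this
  exact x.2 (by rw [hxw]; exact hwS)

lemma cutset_of_leaf (hconn : G.Connected) (hcard : 3 ≤ Fintype.card V)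
    {f w : V} (hadj : G.Adj f w) (hdeg : G.degree f = 1) : IsCutSet G {w} := by
  right
  refine ⟨by simp, ?_⟩
  intro i hi
  rw [Finset.mem_singleton] at hi
  rw [hi, Finset.erase_singleton, numComp_empty G hconn]
  obtain ⟨u, hu⟩ : ∃ u, u ∉ ({f, w} : Finset V) := by
    by_contra h
    push_neg at h
    have h1 := Finset.card_le_card (fun x _ => h x : (Finset.univ : Finset V) ⊆ {f, w})
    have h2 : ({f, w} : Finset V).card ≤ 2 :=
      (Finset.card_insert_le _ _).trans (by simp)
    rw [Finset.card_univ] at h1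
    omega
  have huf : u ≠ f := fun h => hu (by simp [h])
  have huw : u ≠ w := fun h => hu (by simp [h])
  have hfw : f ≠ w := hadj.ne
  have hfmem : f ∈ ((↑({w} : Finset V) : Set V)ᶜ) := by simp [hfw]
  have humem : u ∈ ((↑({w} : Finset V) : Set V)ᶜ) := by simp [huw]
  unfold numComp
  rw [Finite.one_lt_card_iff_nontrivial]
  refine ⟨SimpleGraph.connectedComponentMk _ ⟨f, hfmem⟩,
          SimpleGraph.connectedComponentMk _ ⟨u, humem⟩, ?_⟩
  intro h
  have hr := SimpleGraph.ConnectedComponent.eq.mp h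
  have := reachable_eq_of_isolated (leaf_isolated G {w} hadj hdeg (by simp) hfmem) hr
  exact huf (congrArg Subtype.val this)

end main

theorem stmt3 {V : Type*} [Fintype V] [DecidableEq V] (G : SimpleGraph V)
    [DecidableRel G.Adj] (hconn : G.Connected) (hcard : 4 ≤ Fintype.card V)
    (V1 V2 : Finset V) (hdisj : Disjoint V1 V2) (hcover : V1 ∪ V2 = Finset.univ)
    (hne1 : V1.Nonempty) (hne2 : V2.Nonempty)
    (hbip : ∀ a b, G.Adj a b → (a ∈ V1 ∧ b ∈ V2) ∨ (a ∈ V2 ∧ b ∈ V1))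
    (hunmixed : Unmixed G) :
    ∀ f1 f2 w1 w2 : V, f1 ≠ f2 → G.degree f1 = 1 → G.degree f2 = 1 →
      G.Adj f1 w1 → G.Adj f2 w2 →
      w1 ≠ w2 ∧ IsCutSet G {w1} ∧ IsCutSet G {w2} := by
  intro f1 f2 w1 w2 hne hd1 hd2 ha1 ha2
  have hcard3 : 3 ≤ Fintype.card V := by omega
  have hc1 : IsCutSet G {w1} := cutset_of_leaf G hconn hcard3 ha1 hd1
  have hc2 : IsCutSet G {w2} := cutset_of_leaf G hconn hcard3 ha2 hd2
  refine ⟨?_, hc1, hc2⟩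
  intro hww
  subst hww
  -- w1 = w2 = w; derive contradiction with unmixedness
  have h2 : numComp G {w1} = 2 := by
    have := hunmixed {w1} hc1
    simpa using this
  obtain ⟨u, hu⟩ : ∃ u, u ∉ ({f1, f2, w1} : Finset V) := by
    by_contra h
    push_neg at h
    have h1 := Finset.card_le_card (fun x _ => h x : (Finset.univ : Finset V) ⊆ {f1, f2, w1})
    have hle : ({f1, f2, w1} : Finset V).card ≤ 3 :=
      (Finset.card_insert_le _ _).trans (by
        have := Finset.card_insert_le f2 ({w1} : Finset V)
        simp at this ⊢; omega)
    rw [Finset.card_univ] at h1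
    omega
  have huf1 : u ≠ f1 := fun h => hu (by simp [h])
  have huf2 : u ≠ f2 := fun h => hu (by simp [h])
  have huw : u ≠ w1 := fun h => hu (by simp [h])
  have hf1mem : f1 ∈ ((↑({w1} : Finset V) : Set V)ᶜ) := by simp [ha1.ne]
  have hf2mem : f2 ∈ ((↑({w1} : Finset V) : Set V)ᶜ) := by simp [ha2.ne]
  have humem : u ∈ ((↑({w1} : Finset V) : Set V)ᶜ) := by simp [huw]
  set H := G.induce ((↑({w1} : Finset V) : Set V)ᶜ) with hH
  have hiso1 := leaf_isolated G {w1} ha1 hd1 (by simp) hf1mem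
  have hiso2 := leaf_isolated G {w1} ha2 hd2 (by simp) hf2mem
  set c1 := SimpleGraph.connectedComponentMk H ⟨f1, hf1mem⟩ with hcc1
  set c2 := SimpleGraph.connectedComponentMk H ⟨f2, hf2mem⟩ with hcc2
  set c3 := SimpleGraph.connectedComponentMk H ⟨u, humem⟩ with hcc3
  have h12 : c1 ≠ c2 := by
    intro h
    have := reachable_eq_of_isolated hiso1 (SimpleGraph.ConnectedComponent.eq.mp h)
    exact hne (congrArg Subtype.val this).symm
  have h13 : c1 ≠ c3 := by
    intro h
    have := reachable_eq_of_isolated hiso1 (SimpleGraph.ConnectedComponent.eq.mp h)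
    exact huf1 (congrArg Subtype.val this)
  have h23 : c2 ≠ c3 := by
    intro h
    have := reachable_eq_of_isolated hiso2 (SimpleGraph.ConnectedComponent.eq.mp h)
    exact huf2 (congrArg Subtype.val this)
  have := Nat.card_eq_two_iff.mp (by unfold numComp at h2; exact h2)
  obtain ⟨x, y, hxy, hcov⟩ := this
  have m1 : c1 = x ∨ c1 = y := by
    have : c1 ∈ ({x, y} : Set H.ConnectedComponent) := by rw [hcov]; trivial
    simpa using this
  have m2 : c2 = x ∨ c2 = y := by
    have : c2 ∈ ({x, y} : Set H.ConnectedComponent) := by rw [hcov]; trivial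
    simpa using this
  have m3 : c3 = x ∨ c3 = y := by
    have : c3 ∈ ({x, y} : Set H.ConnectedComponent) := by rw [hcov]; trivial
    simpa using this
  rcases m1 with h|h <;> rcases m2 with h'|h' <;> rcases m3 with h''|h'' <;> simp_all
end

section
/- Let G_1, G_2 be graphs, each with a distinguished leaf f_i, and let G = (G_1, f_1) ∗ (G_2, f_2) be obtained by identifying f_1 with f_2 into a vertex v. Let v_i be the neighbour of f_i in G_i. Then the cut sets of G are exactly the sets S_1 ∪ S_2 with S_i a cut set of G_i (i = 1, 2), together with the sets S_1 ∪ S_2 ∪ {v} with S_i a cut set of G_i not containing v_i (i = 1, 2). -/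
open SimpleGraph Finset

/-- Number of connected components of the subgraph of `G` induced on `A \ S`. -/
noncomputable def numCompIn {V : Type*} (G : SimpleGraph V) (A S : Finset V) : ℕ :=
  Nat.card (G.induce ((↑A : Set V) \ (↑S : Set V))).ConnectedComponent

/-- `S` is a cut set of the subgraph of `G` induced on `A`. -/
def IsCutSetIn {V : Type*} [DecidableEq V] (G : SimpleGraph V) (A S : Finset V) : Prop :=
  S ⊆ A ∧ (S = ∅ ∨ (S ≠ ∅ ∧ ∀ i ∈ S, numCompIn G A (S.erase i) < numCompIn G A S))

/-! If two vertex sets share at most one vertex and no edge joins their private parts, then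
`c(x ∪ y) + |x ∩ y| = c(x) + c(y)` for the component counts of the induced subgraphs. Writing
`c_A(S)` for the number of components of `G[A \ S]`, this gives `c(S) + [v ∉ S] = c_A(S) + c_B(S)`.
Removing a vertex `i ≠ v` from `S` only changes the count on the side of `i`, so the cut condition
at `i` is the cut condition of `(S ∩ A) \ {v}` (or `(S ∩ B) \ {v}`) in that side. As `v` is a leaf
of each side, deleting it from a side leaves `c_A` unchanged if its neighbour survives and lowers it
by one otherwise. Hence `v` lies in no cut set of a side, and the cut condition at `v ∈ S` says
exactly that `v₁, v₂ ∉ S`. -/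

namespace SimpleGraph

variable {V : Type*} {G : SimpleGraph V}

theorem Reachable.of_adj_closed {P : V → Prop} (hP : ∀ a b, G.Adj a b → P a → P b)
    {a b : V} (h : G.Reachable a b) (ha : P a) : P b := by
  obtain ⟨p⟩ := h
  induction p with
  | nil => exact ha
  | cons hadj _ ih => exact ih (hP _ _ hadj ha)

theorem ConnectedComponent.map_induceHomOfLE_injective {x s : Set V} (hxs : x ⊆ s)
    (hbdry : {a | a ∈ x ∧ ∃ b ∈ s \ x, G.Adj a b}.Subsingleton) :
    Function.Injective (ConnectedComponent.map (G.induceHomOfLE hxs).toHom) := by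
  classical
  refine ConnectedComponent.ind₂ fun a b hab => ?_
  -- retract `s` onto `x` by sending everything outside `x` to the boundary vertex `w`
  obtain ⟨w, hw, hout⟩ : ∃ w ∈ x, ∀ a ∈ x, ∀ b ∈ s \ x, G.Adj a b → a = w := by
    rcases Set.eq_empty_or_nonempty {a | a ∈ x ∧ ∃ b ∈ s \ x, G.Adj a b} with h | ⟨w, hw⟩
    · refine ⟨a, a.2, fun c hc d hd hcd => ?_⟩
      exact absurd (h.subset ⟨hc, d, hd, hcd⟩) (Set.notMem_empty c)
    · exact ⟨w, hw.1, fun c hc d hd hcd => hbdry ⟨hc, d, hd, hcd⟩ hw⟩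
  let retract : s → (G.induce x).ConnectedComponent := fun z =>
    if hz : z.1 ∈ x then (G.induce x).connectedComponentMk ⟨z, hz⟩
    else (G.induce x).connectedComponentMk ⟨w, hw⟩
  have hretract : ∀ c d : s, (G.induce s).Adj c d → retract c = retract d := by
    intro c d hcd
    by_cases hc : c.1 ∈ x <;> by_cases hd : d.1 ∈ x
    · simpa [retract, hc, hd] using
        (show (G.induce x).Adj ⟨c, hc⟩ ⟨d, hd⟩ from hcd).reachable
    · simp [retract, hd, hout c hc d ⟨d.2, hd⟩ hcd]
    · simp [retract, hc, hout d hd c ⟨c.2, hc⟩ hcd.symm]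
    · simp [retract, hc, hd]
  have hreach : (G.induce s).Reachable (Set.inclusion hxs a) (Set.inclusion hxs b) :=
    ConnectedComponent.exact hab
  have key := hreach.of_adj_closed (P := fun z => retract z = retract (Set.inclusion hxs a))
    (fun c d hcd hc => (hretract c d hcd).symm.trans hc) rfl
  simpa [retract] using key.symm

theorem ConnectedComponent.range_map_inter_range_map_induce_union {x y : Set V}
    (hsep : ∀ a ∈ x \ y, ∀ b ∈ y \ x, ¬ G.Adj a b) :
    Set.range (ConnectedComponent.map (G.induceHomOfLE (Set.subset_union_left (t := y))).toHom) ∩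
      Set.range (ConnectedComponent.map (G.induceHomOfLE (Set.subset_union_right (s := x))).toHom)
      = Set.range fun u : ↥(x ∩ y) =>
          (G.induce (x ∪ y)).connectedComponentMk ⟨u, Or.inl u.2.1⟩ := by
  ext c
  constructor
  · rintro ⟨⟨cx, rfl⟩, ⟨cy, hcy⟩⟩
    induction cx using ConnectedComponent.ind with | h a => ?_
    induction cy using ConnectedComponent.ind with | h b => ?_
    have hreach : (G.induce (x ∪ y)).Reachable (Set.inclusion Set.subset_union_right b)
        (Set.inclusion Set.subset_union_left a) := ConnectedComponent.exact hcy
    -- a walk from `y` that enters `x \ y` must first pass through `x ∩ y`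
    have key := hreach.of_adj_closed
      (P := fun z => z.1 ∈ y ∨ ∃ u : ↥(x ∩ y), (G.induce (x ∪ y)).Reachable z ⟨u, Or.inl u.2.1⟩)
      (fun z₁ z₂ h₁₂ hz₁ => by
        rcases hz₁ with hz₁ | ⟨u, hu⟩
        · by_cases hz₂ : z₂.1 ∈ y
          · exact Or.inl hz₂
          have hz₂x : z₂.1 ∈ x := z₂.2.resolve_right hz₂
          have hz₁x : z₁.1 ∈ x := by
            by_contra hz₁x
            exact hsep z₂ ⟨hz₂x, hz₂⟩ z₁ ⟨hz₁, hz₁x⟩ h₁₂.symm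
          exact Or.inr ⟨⟨z₁, hz₁x, hz₁⟩, h₁₂.symm.reachable⟩
        · exact Or.inr ⟨u, h₁₂.symm.reachable.trans hu⟩) (Or.inl b.2)
    rcases key with hay | ⟨u, hu⟩
    · exact ⟨⟨a, a.2, hay⟩, rfl⟩
    · exact ⟨u, (ConnectedComponent.sound hu).symm⟩
  · rintro ⟨u, rfl⟩
    exact ⟨⟨(G.induce x).connectedComponentMk ⟨u, u.2.1⟩, rfl⟩,
      ⟨(G.induce y).connectedComponentMk ⟨u, u.2.2⟩, rfl⟩⟩

theorem card_connectedComponent_induce_union_add_ncard_inter [Finite V] {x y : Set V}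
    (hxy : (x ∩ y).Subsingleton) (hsep : ∀ a ∈ x \ y, ∀ b ∈ y \ x, ¬ G.Adj a b) :
    Nat.card (G.induce (x ∪ y)).ConnectedComponent + (x ∩ y).ncard =
      Nat.card (G.induce x).ConnectedComponent + Nat.card (G.induce y).ConnectedComponent := by
  have hinjx := ConnectedComponent.map_induceHomOfLE_injective (G := G)
    (Set.subset_union_left (t := y)) (hxy.anti fun a ⟨hax, b, hb, hab⟩ => ⟨hax, by
      by_contra hay
      exact hsep a ⟨hax, hay⟩ b ⟨hb.1.resolve_left hb.2, hb.2⟩ hab⟩)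
  have hinjy := ConnectedComponent.map_induceHomOfLE_injective (G := G)
    (Set.subset_union_right (s := x)) (hxy.anti fun a ⟨hay, b, hb, hab⟩ => ⟨by
      by_contra hax
      exact hsep b ⟨hb.1.resolve_right hb.2, hb.2⟩ a ⟨hay, hax⟩ hab.symm, hay⟩)
  set ιx := ConnectedComponent.map (G.induceHomOfLE (Set.subset_union_left (t := y))).toHom
  set ιy := ConnectedComponent.map (G.induceHomOfLE (Set.subset_union_right (s := x))).toHom
  have hcover : Set.range ιx ∪ Set.range ιy = Set.univ := by
    refine Set.eq_univ_of_forall (ConnectedComponent.ind fun z => ?_)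
    rcases z.2 with hz | hz
    · exact Or.inl ⟨(G.induce x).connectedComponentMk ⟨z, hz⟩, rfl⟩
    · exact Or.inr ⟨(G.induce y).connectedComponentMk ⟨z, hz⟩, rfl⟩
  have hcount := Set.ncard_union_add_ncard_inter (Set.range ιx) (Set.range ιy)
  have : Subsingleton ↥(x ∩ y) := hxy.coe_sort
  rwa [hcover, Set.ncard_univ, ConnectedComponent.range_map_inter_range_map_induce_union hsep,
    Set.ncard_range_of_injective (Function.injective_of_subsingleton _), Nat.card_coe_set_eq,
    Set.ncard_range_of_injective hinjx, Set.ncard_range_of_injective hinjy] at hcount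

theorem Connected.card_connectedComponent (h : G.Connected) : Nat.card G.ConnectedComponent = 1 :=
  have := h.preconnected.subsingleton_connectedComponent
  have := h.nonempty
  Nat.card_unique

open scoped Classical in
theorem card_connectedComponent_induce_diff_singleton_add_ite [Finite V] {s : Set V} {w u : V}
    (hw : w ∈ s) (hwu : G.Adj w u) (hnbr : ∀ z ∈ s, G.Adj w z → z = u) :
    Nat.card (G.induce (s \ {w})).ConnectedComponent + (if u ∈ s then 0 else 1) =
      Nat.card (G.induce s).ConnectedComponent := by
  have huw : u ≠ w := hwu.ne.symm
  by_cases hu : u ∈ s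
  · -- `w` hangs off `u`: glue the edge `{u, w}` to `s \ {w}` at `u`
    have hunion : s \ {w} ∪ {u, w} = s := by
      ext z
      simp only [Set.mem_union, Set.mem_sdiff, Set.mem_insert_iff, Set.mem_singleton_iff]
      constructor
      · rintro (⟨hz, -⟩ | hz | hz)
        exacts [hz, hz ▸ hu, hz ▸ hw]
      · intro hz
        by_cases hzw : z = w <;> simp [hz, hzw]
    have hinter : s \ {w} ∩ {u, w} = {u} := by
      ext z
      simp only [Set.mem_inter_iff, Set.mem_sdiff, Set.mem_insert_iff, Set.mem_singleton_iff]
      constructor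
      · rintro ⟨⟨-, hzw⟩, hz⟩
        exact hz.resolve_right hzw
      · rintro rfl
        simp [hu, huw]
    have hglue := card_connectedComponent_induce_union_add_ncard_inter (G := G)
      (x := s \ {w}) (y := {u, w}) (hinter ▸ Set.subsingleton_singleton) (by
        rintro a ⟨⟨has, -⟩, ha⟩ b ⟨hb, hb'⟩ hab
        obtain rfl : b = w := hb.resolve_left fun hbu => hb' ⟨hbu ▸ hu, hbu ▸ huw⟩
        exact ha (Or.inl (hnbr a has hab.symm)))
    rw [hunion, hinter, Set.ncard_singleton,
      (induce_pair_connected_of_adj hwu.symm).card_connectedComponent] at hglue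
    simp only [hu, if_true]
    omega
  · -- `w` is isolated in `s`
    have hglue := card_connectedComponent_induce_union_add_ncard_inter (G := G)
      (x := s \ {w}) (y := {w}) (by simp) (by
        rintro a ⟨⟨has, -⟩, -⟩ b ⟨rfl, -⟩ hab
        exact hu (hnbr a has hab.symm ▸ has))
    rw [Set.sdiff_union_self, Set.union_singleton, Set.insert_eq_of_mem hw, Set.sdiff_inter_self,
      Set.ncard_empty, (Connected.of_subsingleton (G := G.induce {w})).card_connectedComponent]
      at hglue
    simp only [hu, if_false]
    omega

end SimpleGraph

section CutSets

variable {V : Type*} {G : SimpleGraph V}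

theorem numCompIn_congr {A T T' : Finset V} (h : ∀ w ∈ A, w ∈ T ↔ w ∈ T') :
    numCompIn G A T = numCompIn G A T' := by
  have hset : (↑A : Set V) \ ↑T = ↑A \ ↑T' := by
    ext w
    simp only [Set.mem_sdiff, mem_coe]
    exact and_congr_right fun hw => not_congr (h w hw)
  rw [numCompIn, hset, numCompIn]

structure IsLeafIn (G : SimpleGraph V) (A : Finset V) (v u : V) : Prop where
  mem : v ∈ A
  mem_nbr : u ∈ A
  adj : G.Adj v u
  eq_of_adj : ∀ w ∈ A, G.Adj v w → w = u

/-- The graph `(G[A], f₁) ∗ (G[B], f₂)` of the paper: both leaves `f₁`, `f₂` become `v`. -/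
structure IsLeafGluing (G : SimpleGraph V) (A B : Finset V) (v v₁ v₂ : V) : Prop where
  mem_or_mem : ∀ w, w ∈ A ∨ w ∈ B
  eq_of_mem_of_mem : ∀ w ∈ A, w ∈ B → w = v
  not_adj : ∀ a ∈ A, a ∉ B → ∀ b ∈ B, b ∉ A → ¬ G.Adj a b
  isLeafIn_left : IsLeafIn G A v v₁
  isLeafIn_right : IsLeafIn G B v v₂

theorem IsLeafGluing.symm {A B : Finset V} {v v₁ v₂ : V} (h : IsLeafGluing G A B v v₁ v₂) :
    IsLeafGluing G B A v v₂ v₁ where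
  mem_or_mem w := (h.mem_or_mem w).symm
  eq_of_mem_of_mem w hB hA := h.eq_of_mem_of_mem w hA hB
  not_adj b hb hbA a ha haB hba := h.not_adj a ha haB b hb hbA hba.symm
  isLeafIn_left := h.isLeafIn_right
  isLeafIn_right := h.isLeafIn_left

variable [DecidableEq V]

theorem isCutSet_iff_forall_erase_lt [Fintype V] {S : Finset V} :
    IsCutSet G S ↔ ∀ i ∈ S, numComp G (S.erase i) < numComp G S := by
  refine ⟨?_, fun h => (em (S = ∅)).imp_right fun hS => ⟨hS, h⟩⟩
  rintro (rfl | ⟨-, h⟩)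
  exacts [fun i hi => absurd hi (notMem_empty i), h]

theorem isCutSetIn_iff_forall_erase_lt {A S : Finset V} :
    IsCutSetIn G A S ↔ S ⊆ A ∧ ∀ i ∈ S, numCompIn G A (S.erase i) < numCompIn G A S := by
  refine and_congr_right fun _ => ⟨?_, fun h => (em (S = ∅)).imp_right fun hS => ⟨hS, h⟩⟩
  rintro (rfl | ⟨-, h⟩)
  exacts [fun i hi => absurd hi (notMem_empty i), h]

namespace IsLeafIn

variable {A T : Finset V} {v u : V}

theorem numCompIn_insert_add_ite [Finite V] (hl : IsLeafIn G A v u) (hvT : v ∉ T) :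
    numCompIn G A (insert v T) + (if u ∈ T then 1 else 0) = numCompIn G A T := by
  have hset : (↑A : Set V) \ ↑(insert v T) = (↑A \ ↑T) \ {v} := by
    rw [coe_insert, Set.insert_eq, Set.union_comm, Set.sdiff_sdiff]
  have key := card_connectedComponent_induce_diff_singleton_add_ite (G := G) (s := ↑A \ ↑T)
    ⟨hl.mem, hvT⟩ hl.adj fun z hz hvz => hl.eq_of_adj z hz.1 hvz
  rw [numCompIn, numCompIn, hset, ← key]
  by_cases huT : u ∈ T <;> simp [huT, hl.mem_nbr]

theorem numCompIn_insert [Finite V] (hl : IsLeafIn G A v u) (huT : u ∉ T) :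
    numCompIn G A (insert v T) = numCompIn G A T := by
  by_cases hvT : v ∈ T
  · rw [insert_eq_of_mem hvT]
  · simpa [huT] using hl.numCompIn_insert_add_ite hvT

theorem notMem_of_isCutSetIn [Finite V] (hl : IsLeafIn G A v u) (hT : IsCutSetIn G A T) :
    v ∉ T := by
  intro hvT
  have hlt := (isCutSetIn_iff_forall_erase_lt.mp hT).2 v hvT
  have hcount := hl.numCompIn_insert_add_ite (notMem_erase v T)
  rw [insert_erase hvT] at hcount
  split_ifs at hcount <;> omega

theorem numCompIn_erase_inter [Finite V] (hl : IsLeafIn G A v u) {S : Finset V}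
    (hS : v ∈ S → u ∉ S) : numCompIn G A ((S ∩ A).erase v) = numCompIn G A S := by
  by_cases hvS : v ∈ S
  · rw [← hl.numCompIn_insert fun hu => hS hvS (mem_of_mem_inter_left (mem_of_mem_erase hu))]
    exact numCompIn_congr fun w hw => by by_cases hwv : w = v <;> simp [hwv, hw, hvS]
  · exact numCompIn_congr fun w hw => by by_cases hwv : w = v <;> simp [hwv, hw, hvS]

end IsLeafIn

namespace IsLeafGluing

variable {A B S : Finset V} {v v₁ v₂ : V}

theorem erase_inter_union_erase_inter (h : IsLeafGluing G A B v v₁ v₂) :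
    (S ∩ A).erase v ∪ (S ∩ B).erase v = S.erase v := by
  rw [← erase_union_distrib, ← inter_union_distrib_left,
    inter_eq_left.mpr fun w _ => mem_union.mpr (h.mem_or_mem w)]

variable [Fintype V]

-- `A \ S` and `B \ S` cover `Sᶜ` and share only `v`, and that only when `v ∉ S`
theorem numComp_add_ite (h : IsLeafGluing G A B v v₁ v₂) (S : Finset V) :
    numComp G S + (if v ∈ S then 0 else 1) = numCompIn G A S + numCompIn G B S := by
  have hinter : (↑A : Set V) \ ↑S ∩ (↑B \ ↑S) = {v} \ ↑S := by
    ext w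
    simp only [Set.mem_inter_iff, Set.mem_sdiff, mem_coe, Set.mem_singleton_iff]
    constructor
    · rintro ⟨⟨hwA, hwS⟩, hwB, -⟩
      exact ⟨h.eq_of_mem_of_mem w hwA hwB, hwS⟩
    · rintro ⟨rfl, hwS⟩
      exact ⟨⟨h.isLeafIn_left.mem, hwS⟩, h.isLeafIn_right.mem, hwS⟩
  have hunion : (↑A : Set V) \ ↑S ∪ (↑B \ ↑S) = (↑S)ᶜ := by
    rw [← Set.union_sdiff_distrib, Set.sdiff_eq_compl_inter, Set.inter_eq_left.mpr]
    exact fun w _ => h.mem_or_mem w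
  have hglue := card_connectedComponent_induce_union_add_ncard_inter (G := G)
    (x := ↑A \ ↑S) (y := ↑B \ ↑S) (hinter ▸ Set.subsingleton_singleton.anti Set.sdiff_subset)
    fun a ha b hb => h.not_adj a ha.1.1 (fun haB => ha.2 ⟨haB, ha.1.2⟩) b hb.1.1
      fun hbA => hb.2 ⟨hbA, hb.1.2⟩
  rw [hunion, hinter] at hglue
  rw [numComp, numCompIn, numCompIn, ← hglue]
  by_cases hvS : v ∈ S
  · simp [hvS, Set.sdiff_eq_empty.mpr (Set.singleton_subset_iff.mpr (mem_coe.mpr hvS))]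
  · simp [hvS, sdiff_eq_left.mpr (Set.disjoint_singleton_left.mpr (mem_coe.not.mpr hvS))]

theorem numComp_erase_lt_iff_left (h : IsLeafGluing G A B v v₁ v₂) {i : V} (hiA : i ∈ A)
    (hiv : i ≠ v) :
    numComp G (S.erase i) < numComp G S ↔ numCompIn G A (S.erase i) < numCompIn G A S := by
  have hiB : i ∉ B := fun hiB => hiv (h.eq_of_mem_of_mem i hiA hiB)
  have hB : numCompIn G B (S.erase i) = numCompIn G B S :=
    numCompIn_congr fun w hw => by simp [ne_of_mem_of_not_mem hw hiB]
  have hS := h.numComp_add_ite S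
  have hSi := h.numComp_add_ite (S.erase i)
  by_cases hvS : v ∈ S <;> simp [hvS, hiv.symm] at hS hSi <;> omega

theorem numComp_erase_self_lt_iff (h : IsLeafGluing G A B v v₁ v₂) (hvS : v ∈ S) :
    numComp G (S.erase v) < numComp G S ↔ v₁ ∉ S ∧ v₂ ∉ S := by
  have hS := h.numComp_add_ite S
  have hSv := h.numComp_add_ite (S.erase v)
  have hA := h.isLeafIn_left.numCompIn_insert_add_ite (notMem_erase v S)
  have hB := h.isLeafIn_right.numCompIn_insert_add_ite (notMem_erase v S)
  rw [insert_erase hvS] at hA hB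
  simp only [hvS, notMem_erase, if_true, if_false, mem_erase, h.isLeafIn_left.adj.ne.symm,
    h.isLeafIn_right.adj.ne.symm, ne_eq, not_false_eq_true, true_and] at hS hSv hA hB
  by_cases h₁ : v₁ ∈ S <;> by_cases h₂ : v₂ ∈ S <;> simp [h₁, h₂] at hA hB ⊢ <;> omega

theorem isCutSetIn_erase_inter_left_iff (h : IsLeafGluing G A B v v₁ v₂)
    (hS : v ∈ S → v₁ ∉ S) : IsCutSetIn G A ((S ∩ A).erase v) ↔
      ∀ i ∈ S, i ∈ A → i ≠ v → numComp G (S.erase i) < numComp G S := by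
  have hl := h.isLeafIn_left
  have hsides : ∀ i, ((S ∩ A).erase v).erase i = ((S.erase i) ∩ A).erase v := fun i => by
    rw [erase_right_comm, erase_inter]
  simp only [isCutSetIn_iff_forall_erase_lt, (erase_subset v _).trans inter_subset_right,
    true_and, mem_erase, mem_inter, hsides, hl.numCompIn_erase_inter hS,
    hl.numCompIn_erase_inter fun hv hv₁ => hS (mem_of_mem_erase hv) (mem_of_mem_erase hv₁)]
  exact ⟨fun hcut i hiS hiA hiv => (h.numComp_erase_lt_iff_left hiA hiv).mpr
      (hcut i ⟨hiv, hiS, hiA⟩),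
    fun hcut i ⟨hiv, hiS, hiA⟩ => (h.numComp_erase_lt_iff_left hiA hiv).mp (hcut i hiS hiA hiv)⟩

theorem isCutSet_iff (h : IsLeafGluing G A B v v₁ v₂) :
    IsCutSet G S ↔ (v ∈ S → v₁ ∉ S ∧ v₂ ∉ S) ∧
      IsCutSetIn G A ((S ∩ A).erase v) ∧ IsCutSetIn G B ((S ∩ B).erase v) := by
  rw [isCutSet_iff_forall_erase_lt]
  constructor
  · intro hS
    have hv : v ∈ S → v₁ ∉ S ∧ v₂ ∉ S := fun hvS =>
      (h.numComp_erase_self_lt_iff hvS).mp (hS v hvS)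
    exact ⟨hv,
      (h.isCutSetIn_erase_inter_left_iff fun hvS => (hv hvS).1).mpr fun i hi _ _ => hS i hi,
      (h.symm.isCutSetIn_erase_inter_left_iff fun hvS => (hv hvS).2).mpr fun i hi _ _ => hS i hi⟩
  · rintro ⟨hv, hA, hB⟩ i hi
    rw [h.isCutSetIn_erase_inter_left_iff fun hvS => (hv hvS).1] at hA
    rw [h.symm.isCutSetIn_erase_inter_left_iff fun hvS => (hv hvS).2] at hB
    by_cases hiv : i = v
    · subst hiv
      exact (h.numComp_erase_self_lt_iff hi).mpr (hv hi)
    · exact (h.mem_or_mem i).elim (hA i hi · hiv) (hB i hi · hiv)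

theorem erase_inter_left_eq (h : IsLeafGluing G A B v v₁ v₂) {S₁ S₂ : Finset V}
    (h₁ : IsCutSetIn G A S₁) (h₂ : IsCutSetIn G B S₂) (hS : S.erase v = S₁ ∪ S₂) :
    (S ∩ A).erase v = S₁ := by
  have hv₂ := h.isLeafIn_right.notMem_of_isCutSetIn h₂
  rw [← erase_inter, hS, union_inter_distrib_right, inter_eq_left.mpr h₁.1,
    union_eq_left.mpr fun w hw => ?_]
  obtain ⟨hw₂, hwA⟩ := mem_inter.mp hw
  exact absurd (h.eq_of_mem_of_mem w hwA (h₂.1 hw₂) ▸ hw₂) hv₂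

theorem isCutSet_iff_of_erase_eq (h : IsLeafGluing G A B v v₁ v₂) {S₁ S₂ : Finset V}
    (h₁ : IsCutSetIn G A S₁) (h₂ : IsCutSetIn G B S₂) (hS : S.erase v = S₁ ∪ S₂) :
    IsCutSet G S ↔ (v ∈ S → v₁ ∉ S₁ ∧ v₂ ∉ S₂) := by
  have hS' : S.erase v = S₂ ∪ S₁ := hS.trans (union_comm _ _)
  have hmem : ∀ w, w ≠ v → (w ∈ S ↔ w ∈ S₁ ∪ S₂) := fun w hwv => by
    rw [← hS, mem_erase, and_iff_right hwv]
  have hv₁ := hmem v₁ h.isLeafIn_left.adj.ne.symm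
  have hv₂ := hmem v₂ h.isLeafIn_right.adj.ne.symm
  have hv₁B : v₁ ∉ S₂ := fun hv₁ => h.isLeafIn_left.adj.ne
    (h.eq_of_mem_of_mem v₁ h.isLeafIn_left.mem_nbr (h₂.1 hv₁)).symm
  have hv₂A : v₂ ∉ S₁ := fun hv₂ => h.isLeafIn_right.adj.ne
    (h.eq_of_mem_of_mem v₂ (h₁.1 hv₂) h.isLeafIn_right.mem_nbr).symm
  rw [h.isCutSet_iff, h.erase_inter_left_eq h₁ h₂ hS, h.symm.erase_inter_left_eq h₂ h₁ hS', hv₁,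
    hv₂]
  simp [h₁, h₂, hv₁B, hv₂A]

end IsLeafGluing

end CutSets

theorem stmt9_general {V : Type*} [Fintype V] [DecidableEq V] (G : SimpleGraph V)
    (A B : Finset V) (v v1 v2 : V)
    (hcover : A ∪ B = Finset.univ) (hint : A ∩ B = {v})
    (hsplit : ∀ a b, G.Adj a b → (a ∈ A ∧ b ∈ A) ∨ (a ∈ B ∧ b ∈ B))
    (hv1A : v1 ∈ A) (hv2B : v2 ∈ B) (hadj1 : G.Adj v v1) (hadj2 : G.Adj v v2)
    (huniq1 : ∀ w ∈ A, G.Adj v w → w = v1)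
    (huniq2 : ∀ w ∈ B, G.Adj v w → w = v2) :
    ∀ S : Finset V, IsCutSet G S ↔
      ((∃ S1 S2 : Finset V, IsCutSetIn G A S1 ∧ IsCutSetIn G B S2 ∧ S = S1 ∪ S2) ∨
       (∃ S1 S2 : Finset V, IsCutSetIn G A S1 ∧ IsCutSetIn G B S2 ∧
          v1 ∉ S1 ∧ v2 ∉ S2 ∧ S = S1 ∪ S2 ∪ {v})) := by
  have hvAB : v ∈ A ∩ B := hint ▸ mem_singleton_self v
  have hg : IsLeafGluing G A B v v1 v2 :=
    { mem_or_mem := fun w => mem_union.mp (hcover ▸ mem_univ w)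
      eq_of_mem_of_mem := fun w hwA hwB => mem_singleton.mp (hint ▸ mem_inter.mpr ⟨hwA, hwB⟩)
      not_adj := fun a _ haB b _ hbA hab => (hsplit a b hab).elim (hbA ·.2) (haB ·.1)
      isLeafIn_left := ⟨(mem_inter.mp hvAB).1, hv1A, hadj1, huniq1⟩
      isLeafIn_right := ⟨(mem_inter.mp hvAB).2, hv2B, hadj2, huniq2⟩ }
  intro S
  constructor
  · intro hS
    obtain ⟨hvS, hA, hB⟩ := hg.isCutSet_iff.mp hS
    by_cases hv : v ∈ S
    · refine Or.inr ⟨_, _, hA, hB, fun h => (hvS hv).1 (mem_of_mem_inter_left (mem_of_mem_erase h)),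
        fun h => (hvS hv).2 (mem_of_mem_inter_left (mem_of_mem_erase h)), ?_⟩
      rw [hg.erase_inter_union_erase_inter, union_comm, ← insert_eq, insert_erase hv]
    · exact Or.inl ⟨_, _, hA, hB, by rw [hg.erase_inter_union_erase_inter, erase_eq_of_notMem hv]⟩
  · rintro (⟨S1, S2, h1, h2, rfl⟩ | ⟨S1, S2, h1, h2, hv1S1, hv2S2, rfl⟩) <;>
      have hv : v ∉ S1 ∪ S2 := by
        simp [hg.isLeafIn_left.notMem_of_isCutSetIn h1, hg.isLeafIn_right.notMem_of_isCutSetIn h2]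
    · exact (hg.isCutSet_iff_of_erase_eq h1 h2 (erase_eq_of_notMem hv)).mpr (absurd · hv)
    · refine (hg.isCutSet_iff_of_erase_eq h1 h2 ?_).mpr fun _ => ⟨hv1S1, hv2S2⟩
      rw [union_comm, ← insert_eq, erase_insert hv]

/-- `G = (G₁,f₁) ∗ (G₂,f₂)`, realized as an ambient graph `G` on `A ∪ B` with
`A ∩ B = {v}`, no edges between `A \ {v}` and `B \ {v}`, where `G₁`, `G₂` are the subgraphs
induced on `A` and `B`, `v` (the identification of the two leaves) is a leaf of each of them,
with neighbours `v₁ ∈ A` and `v₂ ∈ B` respectively. -/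
theorem stmt9 {V : Type*} [Fintype V] [DecidableEq V] (G : SimpleGraph V)
    (A B : Finset V) (v v1 v2 : V)
    (hcover : A ∪ B = Finset.univ) (hint : A ∩ B = {v})
    (hsplit : ∀ a b, G.Adj a b → (a ∈ A ∧ b ∈ A) ∨ (a ∈ B ∧ b ∈ B))
    (hconn1 : (G.induce (↑A : Set V)).Connected)
    (hconn2 : (G.induce (↑B : Set V)).Connected)
    (hv1A : v1 ∈ A) (hv2B : v2 ∈ B) (hadj1 : G.Adj v v1) (hadj2 : G.Adj v v2)
    (huniq1 : ∀ w ∈ A, G.Adj v w → w = v1)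
    (huniq2 : ∀ w ∈ B, G.Adj v w → w = v2) :
    ∀ S : Finset V, IsCutSet G S ↔
      ((∃ S1 S2 : Finset V, IsCutSetIn G A S1 ∧ IsCutSetIn G B S2 ∧ S = S1 ∪ S2) ∨
       (∃ S1 S2 : Finset V, IsCutSetIn G A S1 ∧ IsCutSetIn G B S2 ∧
          v1 ∉ S1 ∧ v2 ∉ S2 ∧ S = S1 ∪ S2 ∪ {v})) :=
  stmt9_general G A B v v1 v2 hcover hint hsplit hv1A hv2B hadj1 hadj2 huniq1 huniq2
end

section
/- With G = G_1 ∗ G_2 as above (identifying leaves f_1 and f_2), the unmixedness condition c_G(S) = |S| + 1 for all cut sets S of G holds if and only if it holds for both G_1 and G_2. -/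
open SimpleGraph Finset

section Aux
open SimpleGraph

variable {V : Type*} {G : SimpleGraph V}

lemma walk_const {β : Sort*} {G : SimpleGraph V} (f : V → β)
    (h : ∀ v w, G.Adj v w → f v = f w) {v w : V} (p : G.Walk v w) : f v = f w := by
  induction p with
  | nil => rfl
  | cons ha q ih => exact (h _ _ ha).trans ih

/-- Lift a function invariant under adjacency to connected components. -/
def liftAdj {β : Sort*} (G : SimpleGraph V) (f : V → β) (h : ∀ v w, G.Adj v w → f v = f w) :
    G.ConnectedComponent → β :=
  ConnectedComponent.lift f (fun v w p _ => walk_const f h p)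

@[simp] lemma liftAdj_mk {β : Sort*} (G : SimpleGraph V) (f : V → β)
    (h : ∀ v w, G.Adj v w → f v = f w) (v : V) :
    liftAdj G f h (G.connectedComponentMk v) = f v := rfl

/-- Inclusion homomorphism between induced subgraphs. -/
def incHom (G : SimpleGraph V) {s t : Set V} (h : s ⊆ t) : G.induce s →g G.induce t :=
  ⟨fun x => ⟨x.1, h x.2⟩, fun hab => hab⟩

@[simp] lemma incHom_map_mk {s t : Set V} (h : s ⊆ t) (x : s) :
    ConnectedComponent.map (incHom G h) ((G.induce s).connectedComponentMk x)
      = (G.induce t).connectedComponentMk ⟨x.1, h x.2⟩ := rfl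

lemma mk_congr {s : Set V} {x y : s} (h : (x : V) = y) :
    (G.induce s).connectedComponentMk x = (G.induce s).connectedComponentMk y := by
  congr 1; exact Subtype.ext h

lemma mk_adj {s : Set V} {x y : s} (h : G.Adj x y) :
    (G.induce s).connectedComponentMk x = (G.induce s).connectedComponentMk y :=
  ConnectedComponent.sound (Adj.reachable (by exact h))

lemma ncc_congr (G : SimpleGraph V) {s t : Set V} (h : s = t) :
    Nat.card (G.induce s).ConnectedComponent = Nat.card (G.induce t).ConnectedComponent := by
  subst h; rfl

lemma ncc_connected {H : SimpleGraph V} (h : H.Connected) :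
    Nat.card H.ConnectedComponent = 1 := by
  have hp := h.preconnected
  have : Subsingleton H.ConnectedComponent := ⟨fun a b => by
    refine ConnectedComponent.ind₂ (fun x y => ?_) a b
    exact ConnectedComponent.sound (hp x y)⟩
  have : Nonempty H.ConnectedComponent := ⟨H.connectedComponentMk h.nonempty.some⟩
  exact Nat.card_unique

open Classical in
/-- Components of a disjoint split with no cross edges. -/
noncomputable def splitEquiv (G : SimpleGraph V) (X₁ X₂ : Set V)
    (hd : ∀ x ∈ X₁, x ∉ X₂)
    (hcross : ∀ a ∈ X₁, ∀ b ∈ X₂, ¬ G.Adj a b) :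
    (G.induce (X₁ ∪ X₂)).ConnectedComponent ≃
      (G.induce X₁).ConnectedComponent ⊕ (G.induce X₂).ConnectedComponent where
  toFun := liftAdj _ (fun x => if h : (x : V) ∈ X₁
      then Sum.inl ((G.induce X₁).connectedComponentMk ⟨x.1, h⟩)
      else Sum.inr ((G.induce X₂).connectedComponentMk ⟨x.1, x.2.resolve_left h⟩))
    (by
      rintro ⟨a, ha⟩ ⟨b, hb⟩ hab
      change G.Adj a b at hab
      by_cases h1 : a ∈ X₁ <;> by_cases h2 : b ∈ X₁
      · simp only [dif_pos h1, dif_pos h2]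
        exact congrArg _ (mk_adj hab)
      · exact absurd hab (hcross a h1 b (hb.resolve_left h2))
      · exact absurd hab.symm (hcross b h2 a (ha.resolve_left h1))
      · simp only [dif_neg h1, dif_neg h2]
        exact congrArg _ (mk_adj hab))
  invFun := Sum.elim (ConnectedComponent.map (incHom G Set.subset_union_left))
    (ConnectedComponent.map (incHom G Set.subset_union_right))
  left_inv := by
    refine ConnectedComponent.ind (fun x => ?_)
    by_cases h1 : (x : V) ∈ X₁
    · rw [liftAdj_mk, dif_pos h1, Sum.elim_inl, incHom_map_mk]
    · rw [liftAdj_mk, dif_neg h1, Sum.elim_inr, incHom_map_mk]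
  right_inv := by
    rintro (c | c) <;> refine ConnectedComponent.ind (fun x => ?_) c
    · rw [Sum.elim_inl, incHom_map_mk, liftAdj_mk, dif_pos x.2]
    · rw [Sum.elim_inr, incHom_map_mk, liftAdj_mk, dif_neg (fun h => hd _ h x.2)]

lemma split_card [Finite V] (G : SimpleGraph V) (X₁ X₂ : Set V)
    (hd : ∀ x ∈ X₁, x ∉ X₂)
    (hcross : ∀ a ∈ X₁, ∀ b ∈ X₂, ¬ G.Adj a b) :
    Nat.card (G.induce (X₁ ∪ X₂)).ConnectedComponent =
      Nat.card (G.induce X₁).ConnectedComponent + Nat.card (G.induce X₂).ConnectedComponent := by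
  rw [Nat.card_congr (splitEquiv G X₁ X₂ hd hcross), Nat.card_sum]

lemma singleton_card (G : SimpleGraph V) (w : V) :
    Nat.card (G.induce {w}).ConnectedComponent = 1 := by
  have h1 : Subsingleton ({w} : Set V) := ⟨fun a b => Subtype.ext (a.2.trans b.2.symm)⟩
  have : Subsingleton (G.induce ({w} : Set V)).ConnectedComponent :=
    ⟨fun a b => by
      refine ConnectedComponent.ind₂ (fun x y => ?_) a b
      rw [Subsingleton.elim x y]⟩
  have : Nonempty (G.induce ({w} : Set V)).ConnectedComponent :=
    ⟨_root_.SimpleGraph.connectedComponentMk _ ⟨w, rfl⟩⟩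
  exact Nat.card_unique

/-- Adding an isolated vertex. -/
lemma isolated_card [Finite V] (G : SimpleGraph V) (X : Set V) (w : V) (hw : w ∉ X)
    (hiso : ∀ x ∈ X, ¬ G.Adj w x) :
    Nat.card (G.induce (insert w X)).ConnectedComponent =
      Nat.card (G.induce X).ConnectedComponent + 1 := by
  have hs : (insert w X : Set V) = X ∪ {w} := by
    ext x; simp [or_comm]
  rw [ncc_congr G hs, split_card G X {w} (fun x hx hx' => hw (hx' ▸ hx))
    (fun a ha b hb hab => by
      have : b = w := hb
      subst this
      exact hiso a ha hab.symm), singleton_card]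

open Classical in
/-- Adding a pendant vertex with unique neighbour `u`. -/
noncomputable def pendantEquiv (G : SimpleGraph V) (X : Set V) (w u : V)
    (hw : w ∉ X) (hu : u ∈ X) (hadj : G.Adj w u) (huniq : ∀ x ∈ X, G.Adj w x → x = u) :
    (G.induce (insert w X)).ConnectedComponent ≃ (G.induce X).ConnectedComponent where
  toFun := liftAdj _ (fun x => if h : (x : V) ∈ X
      then (G.induce X).connectedComponentMk ⟨x.1, h⟩
      else (G.induce X).connectedComponentMk ⟨u, hu⟩)
    (by
      rintro ⟨a, ha⟩ ⟨b, hb⟩ hab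
      change G.Adj a b at hab
      by_cases h1 : a ∈ X <;> by_cases h2 : b ∈ X
      · simp only [dif_pos h1, dif_pos h2]
        exact mk_adj hab
      · have hbw : b = w := hb.resolve_right h2
        subst hbw
        simp only [dif_pos h1, dif_neg h2]
        exact mk_congr (huniq a h1 hab.symm)
      · have haw : a = w := ha.resolve_right h1
        subst haw
        simp only [dif_neg h1, dif_pos h2]
        exact mk_congr (huniq b h2 hab).symm
      · have haw : a = w := ha.resolve_right h1
        have hbw : b = w := hb.resolve_right h2
        exact absurd (haw ▸ hbw ▸ hab) (G.irrefl))
  invFun := ConnectedComponent.map (incHom G (Set.subset_insert w X))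
  left_inv := by
    refine ConnectedComponent.ind (fun x => ?_)
    by_cases h1 : (x : V) ∈ X
    · rw [liftAdj_mk, dif_pos h1, incHom_map_mk]
    · rw [liftAdj_mk, dif_neg h1, incHom_map_mk]
      have hxw : (x : V) = w := x.2.resolve_right h1
      exact mk_adj (by rw [hxw]; exact hadj.symm)
  right_inv := by
    refine ConnectedComponent.ind (fun x => ?_)
    rw [incHom_map_mk, liftAdj_mk, dif_pos x.2]

lemma pendant_card [Finite V] (G : SimpleGraph V) (X : Set V) (w u : V)
    (hw : w ∉ X) (hu : u ∈ X) (hadj : G.Adj w u) (huniq : ∀ x ∈ X, G.Adj w x → x = u) :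
    Nat.card (G.induce (insert w X)).ConnectedComponent =
      Nat.card (G.induce X).ConnectedComponent :=
  Nat.card_congr (pendantEquiv G X w u hw hu hadj huniq)

lemma reach_surgery (G : SimpleGraph V) (X : Set V) (w u₁ u₂ : V)
    (hw : w ∉ X) (h1 : u₁ ∈ X) (h2 : u₂ ∈ X)
    (huniq : ∀ x ∈ X, G.Adj w x → x = u₁ ∨ x = u₂)
    {a b : ↑(insert w X)}
    (p : (G.induce (insert w X)).Walk a b) (hb : (b : V) ∈ X) :
    (∀ ha : (a : V) ∈ X,
      (G.induce X).Reachable ⟨a, ha⟩ ⟨b, hb⟩ ∨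
        ((G.induce X).Reachable ⟨a, ha⟩ ⟨u₁, h1⟩ ∧ (G.induce X).Reachable ⟨u₂, h2⟩ ⟨b, hb⟩) ∨
        ((G.induce X).Reachable ⟨a, ha⟩ ⟨u₂, h2⟩ ∧ (G.induce X).Reachable ⟨u₁, h1⟩ ⟨b, hb⟩)) ∧
    ((a : V) = w → (G.induce X).Reachable ⟨u₁, h1⟩ ⟨b, hb⟩ ∨
      (G.induce X).Reachable ⟨u₂, h2⟩ ⟨b, hb⟩) := by
  induction p with
  | nil =>
    constructor
    · intro ha
      exact Or.inl (by rfl)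
    · intro haw
      exact absurd (haw ▸ hb) hw
  | @cons a c b h q ih =>
    have hadj : G.Adj (a : V) (c : V) := h
    constructor
    · intro ha
      by_cases hc : (c : V) ∈ X
      · have step : (G.induce X).Reachable ⟨a, ha⟩ ⟨c, hc⟩ := Adj.reachable (by exact hadj)
        rcases (ih hb).1 hc with h' | ⟨r1, r2⟩ | ⟨r1, r2⟩
        · exact Or.inl (step.trans h')
        · exact Or.inr (Or.inl ⟨step.trans r1, r2⟩)
        · exact Or.inr (Or.inr ⟨step.trans r1, r2⟩)
      · have hcw : (c : V) = w := c.2.resolve_right hc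
        have hau : (a : V) = u₁ ∨ (a : V) = u₂ := by
          refine huniq a ha ?_
          have := hadj.symm; rw [hcw] at this; exact this
        rcases (ih hb).2 hcw with r | r <;> rcases hau with e | e
        · exact Or.inl (by rw [show (⟨a, ha⟩ : X) = ⟨u₁, h1⟩ from Subtype.ext e]; exact r)
        · exact Or.inr (Or.inr ⟨by rw [show (⟨a, ha⟩ : X) = ⟨u₂, h2⟩ from Subtype.ext e], r⟩)
        · exact Or.inr (Or.inl ⟨by rw [show (⟨a, ha⟩ : X) = ⟨u₁, h1⟩ from Subtype.ext e], r⟩)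
        · exact Or.inl (by rw [show (⟨a, ha⟩ : X) = ⟨u₂, h2⟩ from Subtype.ext e]; exact r)
    · intro haw
      have hcX : (c : V) ∈ X := by
        refine c.2.resolve_left (fun e => ?_)
        exact G.irrefl (by rw [haw, e] at hadj; exact hadj)
      have hcu : (c : V) = u₁ ∨ (c : V) = u₂ := by
        refine huniq c hcX ?_
        have := hadj; rw [haw] at this; exact this
      rcases (ih hb).1 hcX with h' | ⟨r1, r2⟩ | ⟨r1, r2⟩
      · rcases hcu with e | e
        · exact Or.inl (by rw [show (⟨u₁, h1⟩ : X) = ⟨c, hcX⟩ from Subtype.ext e.symm]; exact h')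
        · exact Or.inr (by rw [show (⟨u₂, h2⟩ : X) = ⟨c, hcX⟩ from Subtype.ext e.symm]; exact h')
      · exact Or.inr r2
      · exact Or.inl r2

open Classical in
lemma merge_card [Finite V] (G : SimpleGraph V) (X : Set V) (w u₁ u₂ : V)
    (hw : w ∉ X) (h1 : u₁ ∈ X) (h2 : u₂ ∈ X)
    (ha1 : G.Adj w u₁) (ha2 : G.Adj w u₂)
    (huniq : ∀ x ∈ X, G.Adj w x → x = u₁ ∨ x = u₂)
    (hne : (G.induce X).connectedComponentMk ⟨u₁, h1⟩ ≠
      (G.induce X).connectedComponentMk ⟨u₂, h2⟩) :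
    Nat.card (G.induce X).ConnectedComponent =
      Nat.card (G.induce (insert w X)).ConnectedComponent + 1 := by
  set f : (G.induce X).ConnectedComponent → (G.induce (insert w X)).ConnectedComponent :=
    ConnectedComponent.map (incHom G (Set.subset_insert w X)) with hf
  set c₁ := (G.induce X).connectedComponentMk ⟨u₁, h1⟩ with hc₁
  set c₂ := (G.induce X).connectedComponentMk ⟨u₂, h2⟩ with hc₂
  have htri : ∀ c c', f c = f c' → c = c' ∨ (c = c₁ ∧ c' = c₂) ∨ (c = c₂ ∧ c' = c₁) := by
    refine fun c c' => ConnectedComponent.ind₂ (fun x y hxy => ?_) c c'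
    rw [hf, incHom_map_mk, incHom_map_mk, ConnectedComponent.eq] at hxy
    obtain ⟨p⟩ := hxy
    rcases (reach_surgery G X w u₁ u₂ hw h1 h2 huniq p y.2).1 x.2 with h' | ⟨r1, r2⟩ | ⟨r1, r2⟩
    · exact Or.inl (ConnectedComponent.sound h')
    · exact Or.inr (Or.inl ⟨ConnectedComponent.sound r1, (ConnectedComponent.sound r2).symm⟩)
    · exact Or.inr (Or.inr ⟨ConnectedComponent.sound r1, (ConnectedComponent.sound r2).symm⟩)
  have hfc12 : f c₁ = f c₂ := by
    rw [hf, hc₁, hc₂, incHom_map_mk, incHom_map_mk, ConnectedComponent.eq]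
    exact Reachable.trans (Adj.reachable (by exact ha1.symm : (G.induce (insert w X)).Adj
      ⟨u₁, Set.subset_insert w X h1⟩ ⟨w, Set.mem_insert w X⟩))
      (Adj.reachable (by exact ha2))
  have hsurj : ∀ d, ∃ c, c ≠ c₂ ∧ f c = d := by
    refine fun d => ConnectedComponent.ind (fun z => ?_) d
    by_cases hz : (z : V) ∈ X
    · by_cases he : (G.induce X).connectedComponentMk ⟨z.1, hz⟩ = c₂
      · refine ⟨c₁, hne, ?_⟩
        rw [hfc12, ← he, hf, incHom_map_mk]
      · exact ⟨(G.induce X).connectedComponentMk ⟨z.1, hz⟩, he, rfl⟩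
    · have hzw : (z : V) = w := z.2.resolve_right hz
      refine ⟨c₁, hne, ?_⟩
      rw [hf, hc₁, incHom_map_mk, ConnectedComponent.eq]
      exact Adj.reachable (by
        show G.Adj u₁ (z : V)
        rw [hzw]; exact ha1.symm)
  have e : {c : (G.induce X).ConnectedComponent // ¬ c = c₂} ≃
      (G.induce (insert w X)).ConnectedComponent := by
    refine Equiv.ofBijective (fun c => f c.1) ⟨?_, ?_⟩
    · rintro ⟨c, hc⟩ ⟨c', hc'⟩ hcc
      rcases htri c c' hcc with h' | ⟨e1, e2⟩ | ⟨e1, e2⟩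
      · exact Subtype.ext h'
      · exact absurd e2 hc'
      · exact absurd e1 hc
    · intro d
      obtain ⟨c, hc, hfc⟩ := hsurj d
      exact ⟨⟨c, hc⟩, hfc⟩
  calc Nat.card (G.induce X).ConnectedComponent
      = Nat.card ({c // c = c₂} ⊕ {c // ¬ c = c₂}) :=
        (Nat.card_congr (Equiv.sumCompl (· = c₂))).symm
    _ = Nat.card {c // c = c₂} + Nat.card {c // ¬ c = c₂} := Nat.card_sum
    _ = 1 + Nat.card (G.induce (insert w X)).ConnectedComponent := by
        rw [Nat.card_congr e, Nat.card_unique]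
    _ = _ + 1 := Nat.add_comm _ _

section App
open Finset
variable {V : Type*} [Fintype V] [DecidableEq V] {G : SimpleGraph V} {A B : Finset V} {v v1 v2 : V}

/-- L2: if `v ∈ S` then components split. -/
lemma compSplit (hcover : A ∪ B = Finset.univ) (hint : A ∩ B = {v})
    (hsplit : ∀ a b, G.Adj a b → (a ∈ A ∧ b ∈ A) ∨ (a ∈ B ∧ b ∈ B))
    {S : Finset V} (hvS : v ∈ S) :
    numComp G S = numCompIn G A S + numCompIn G B S := by
  have hmemv : ∀ x : V, x ∈ A → x ∈ B → x = v := by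
    intro x hxA hxB
    have : x ∈ A ∩ B := Finset.mem_inter.mpr ⟨hxA, hxB⟩
    rw [hint] at this
    exact Finset.mem_singleton.mp this
  have hs : ((↑S : Set V)ᶜ) = ((↑A : Set V) \ ↑S) ∪ ((↑B : Set V) \ ↑S) := by
    ext x
    have hx : x ∈ A ∪ B := hcover ▸ Finset.mem_univ x
    rw [Finset.mem_union] at hx
    simp only [Set.mem_compl_iff, Set.mem_union, Set.mem_diff, Finset.mem_coe]
    tauto
  unfold numComp numCompIn
  rw [ncc_congr G hs]
  refine split_card G _ _ ?_ ?_
  · rintro x ⟨hxA, hxS⟩ ⟨hxB, -⟩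
    exact hxS (hmemv x hxA hxB ▸ hvS)
  · rintro a ⟨haA, haS⟩ b ⟨hbB, hbS⟩ hab
    rcases hsplit a b hab with ⟨-, hbA⟩ | ⟨haB, -⟩
    · exact hbS (hmemv b hbA hbB ▸ hvS)
    · exact haS (hmemv a haA haB ▸ hvS)

/-- L3(a): erasing `v` (pendant with neighbour `v1 ∉ S`) keeps the count on the `A` side. -/
lemma eraseV_pendant (hvA : v ∈ A) (hv1A : v1 ∈ A) (hadj1 : G.Adj v v1)
    (huniq1 : ∀ w ∈ A, G.Adj v w → w = v1)
    {S : Finset V} (hvS : v ∈ S) (hv1S : v1 ∉ S) :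
    numCompIn G A (S.erase v) = numCompIn G A S := by
  have hset : ((↑A : Set V) \ ↑(S.erase v)) = insert v ((↑A : Set V) \ ↑S) := by
    ext x
    simp only [Set.mem_diff, Finset.mem_coe, Finset.mem_erase, Set.mem_insert_iff]
    constructor
    · rintro ⟨hxA, hxS⟩
      by_cases hxv : x = v
      · exact Or.inl hxv
      · exact Or.inr ⟨hxA, fun h => hxS ⟨hxv, h⟩⟩
    · rintro (rfl | ⟨hxA, hxS⟩)
      · exact ⟨hvA, fun h => h.1 rfl⟩
      · exact ⟨hxA, fun h => hxS h.2⟩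
  unfold numCompIn
  rw [ncc_congr G hset]
  exact pendant_card G _ v v1 (fun h => h.2 hvS) ⟨hv1A, hv1S⟩ hadj1
    (fun x hx h => huniq1 x hx.1 h)

/-- L3(b): erasing `v` (isolated since `v1 ∈ S`) adds one on the `A` side. -/
lemma eraseV_isolated (hvA : v ∈ A) (hv1A : v1 ∈ A)
    (huniq1 : ∀ w ∈ A, G.Adj v w → w = v1)
    {S : Finset V} (hvS : v ∈ S) (hv1S : v1 ∈ S) :
    numCompIn G A (S.erase v) = numCompIn G A S + 1 := by
  have hset : ((↑A : Set V) \ ↑(S.erase v)) = insert v ((↑A : Set V) \ ↑S) := by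
    ext x
    simp only [Set.mem_diff, Finset.mem_coe, Finset.mem_erase, Set.mem_insert_iff]
    constructor
    · rintro ⟨hxA, hxS⟩
      by_cases hxv : x = v
      · exact Or.inl hxv
      · exact Or.inr ⟨hxA, fun h => hxS ⟨hxv, h⟩⟩
    · rintro (rfl | ⟨hxA, hxS⟩)
      · exact ⟨hvA, fun h => h.1 rfl⟩
      · exact ⟨hxA, fun h => hxS h.2⟩
  unfold numCompIn
  rw [ncc_congr G hset]
  refine isolated_card G _ v (fun h => h.2 hvS) ?_
  rintro x ⟨hxA, hxS⟩ h
  exact hxS (huniq1 x hxA h ▸ hv1S)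


lemma splitEquiv_ne (G : SimpleGraph V) (X₁ X₂ : Set V)
    (hd : ∀ x ∈ X₁, x ∉ X₂)
    (hcross : ∀ a ∈ X₁, ∀ b ∈ X₂, ¬ G.Adj a b)
    {x y : ↑(X₁ ∪ X₂)} (hx : (x : V) ∈ X₁) (hy : (y : V) ∉ X₁) :
    (G.induce (X₁ ∪ X₂)).connectedComponentMk x ≠
      (G.induce (X₁ ∪ X₂)).connectedComponentMk y := by
  intro hcon
  have := congrArg (splitEquiv G X₁ X₂ hd hcross) hcon
  have hx' : splitEquiv G X₁ X₂ hd hcross ((G.induce (X₁ ∪ X₂)).connectedComponentMk x)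
      = Sum.inl ((G.induce X₁).connectedComponentMk ⟨x.1, hx⟩) := by
    simp only [splitEquiv, Equiv.coe_fn_mk, liftAdj_mk]
    rw [dif_pos hx]
  have hy' : splitEquiv G X₁ X₂ hd hcross ((G.induce (X₁ ∪ X₂)).connectedComponentMk y)
      = Sum.inr ((G.induce X₂).connectedComponentMk ⟨y.1, y.2.resolve_left hy⟩) := by
    simp only [splitEquiv, Equiv.coe_fn_mk, liftAdj_mk]
    rw [dif_neg hy]
  rw [hx', hy'] at this
  exact Sum.inl_ne_inr this

/-- L1: if `v ∉ S` the counts satisfy inclusion–exclusion. -/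
lemma compGlue (hcover : A ∪ B = Finset.univ) (hint : A ∩ B = {v})
    (hsplit : ∀ a b, G.Adj a b → (a ∈ A ∧ b ∈ A) ∨ (a ∈ B ∧ b ∈ B))
    (hv1A : v1 ∈ A) (hv2B : v2 ∈ B) (hadj1 : G.Adj v v1) (hadj2 : G.Adj v v2)
    (huniq1 : ∀ w ∈ A, G.Adj v w → w = v1)
    (huniq2 : ∀ w ∈ B, G.Adj v w → w = v2)
    {S : Finset V} (hvS : v ∉ S) :
    numComp G S + 1 = numCompIn G A S + numCompIn G B S := by
  classical
  have hmemv : ∀ x : V, x ∈ A → x ∈ B → x = v := by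
    intro x hxA hxB
    have : x ∈ A ∩ B := Finset.mem_inter.mpr ⟨hxA, hxB⟩
    rw [hint] at this
    exact Finset.mem_singleton.mp this
  have hvA : v ∈ A := by
    have : v ∈ A ∩ B := hint ▸ Finset.mem_singleton_self v
    exact (Finset.mem_inter.mp this).1
  have hvB : v ∈ B := by
    have : v ∈ A ∩ B := hint ▸ Finset.mem_singleton_self v
    exact (Finset.mem_inter.mp this).2
  have hv1v : v1 ≠ v := fun h => G.irrefl (h ▸ hadj1)
  have hv2v : v2 ≠ v := fun h => G.irrefl (h ▸ hadj2)
  have hv2A : v2 ∉ A := fun h => hv2v (hmemv v2 h hv2B)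
  have hv1B : v1 ∉ B := fun h => hv1v (hmemv v1 hv1A h)
  set T : Finset V := insert v S with hT
  have hvT : v ∈ T := Finset.mem_insert_self v S
  have hTS : T.erase v = S := Finset.erase_insert hvS
  -- the splitting set
  set X : Set V := ((↑A : Set V) \ ↑T) ∪ ((↑B : Set V) \ ↑T) with hX
  have hs : ((↑T : Set V)ᶜ) = X := by
    ext x
    have hx : x ∈ A ∪ B := hcover ▸ Finset.mem_univ x
    rw [Finset.mem_union] at hx
    simp only [hX, Set.mem_compl_iff, Set.mem_union, Set.mem_diff, Finset.mem_coe]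
    tauto
  have hsS : ((↑S : Set V)ᶜ) = insert v X := by
    rw [← hs]
    ext x
    simp only [Set.mem_insert_iff, Set.mem_compl_iff, Finset.mem_coe, hT, Finset.mem_insert]
    by_cases hxv : x = v
    · subst hxv; tauto
    · tauto
  have hd : ∀ x ∈ ((↑A : Set V) \ ↑T), x ∉ ((↑B : Set V) \ ↑T) := by
    rintro x ⟨hxA, hxT⟩ ⟨hxB, -⟩
    exact hxT (Finset.mem_coe.mpr (hmemv x hxA hxB ▸ hvT))
  have hcross : ∀ a ∈ ((↑A : Set V) \ ↑T), ∀ b ∈ ((↑B : Set V) \ ↑T), ¬ G.Adj a b := by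
    rintro a ⟨haA, haT⟩ b ⟨hbB, hbT⟩ hab
    rcases hsplit a b hab with ⟨-, hbA⟩ | ⟨haB, -⟩
    · exact hbT (Finset.mem_coe.mpr (hmemv b hbA hbB ▸ hvT))
    · exact haT (Finset.mem_coe.mpr (hmemv a haA haB ▸ hvT))
  have hvX : v ∉ X := by
    rintro (⟨-, h⟩ | ⟨-, h⟩) <;> exact h (Finset.mem_coe.mpr hvT)
  have hTcard : numComp G T = numCompIn G A T + numCompIn G B T := by
    unfold numComp numCompIn
    rw [ncc_congr G hs, ← hs]
    rw [hs]
    exact split_card G _ _ hd hcross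
  have hSX : numComp G S = Nat.card (G.induce (insert v X)).ConnectedComponent := by
    unfold numComp
    exact ncc_congr G hsS
  have hTX : numComp G T = Nat.card (G.induce X).ConnectedComponent := by
    unfold numComp
    exact ncc_congr G hs
  have huniqX : ∀ x ∈ X, G.Adj v x → x = v1 ∨ x = v2 := by
    rintro x (⟨hxA, -⟩ | ⟨hxB, -⟩) h
    · exact Or.inl (huniq1 x hxA h)
    · exact Or.inr (huniq2 x hxB h)
  by_cases h1 : v1 ∈ S <;> by_cases h2 : v2 ∈ S
  · -- both in S : v isolated in X
    have hiso : ∀ x ∈ X, ¬ G.Adj v x := by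
      rintro x hxX h
      rcases huniqX x hxX h with rfl | rfl
      · rcases hxX with ⟨-, hxT⟩ | ⟨hxB, -⟩
        · exact hxT (Finset.mem_coe.mpr (Finset.mem_insert_of_mem h1))
        · exact hv1B hxB
      · rcases hxX with ⟨hxA, -⟩ | ⟨-, hxT⟩
        · exact hv2A hxA
        · exact hxT (Finset.mem_coe.mpr (Finset.mem_insert_of_mem h2))
    have hstep := isolated_card G X v hvX hiso
    have e1 : numCompIn G A S = numCompIn G A T + 1 := by
      rw [← hTS]
      exact eraseV_isolated hvA hv1A huniq1 hvT (Finset.mem_insert_of_mem h1)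
    have e2 : numCompIn G B S = numCompIn G B T + 1 := by
      rw [← hTS]
      exact eraseV_isolated hvB hv2B huniq2 hvT (Finset.mem_insert_of_mem h2)
    omega
  · -- v1 ∈ S, v2 ∉ S : pendant at v2
    have hv2X : v2 ∈ X := Or.inr ⟨hv2B, fun h => (Finset.mem_insert.mp h).elim hv2v h2⟩
    have hstep := pendant_card G X v v2 hvX hv2X hadj2 (by
      rintro x hxX h
      rcases huniqX x hxX h with rfl | rfl
      · exfalso
        rcases hxX with ⟨-, hxT⟩ | ⟨hxB, -⟩
        · exact hxT (Finset.mem_coe.mpr (Finset.mem_insert_of_mem h1))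
        · exact hv1B hxB
      · rfl)
    have e1 : numCompIn G A S = numCompIn G A T + 1 := by
      rw [← hTS]
      exact eraseV_isolated hvA hv1A huniq1 hvT (Finset.mem_insert_of_mem h1)
    have e2 : numCompIn G B S = numCompIn G B T := by
      rw [← hTS]
      exact eraseV_pendant hvB hv2B hadj2 huniq2 hvT
        (fun h => (Finset.mem_insert.mp h).elim hv2v h2)
    omega
  · -- v1 ∉ S, v2 ∈ S : pendant at v1
    have hv1X : v1 ∈ X := Or.inl ⟨hv1A, fun h => (Finset.mem_insert.mp h).elim hv1v h1⟩
    have hstep := pendant_card G X v v1 hvX hv1X hadj1 (by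
      rintro x hxX h
      rcases huniqX x hxX h with rfl | rfl
      · rfl
      · exfalso
        rcases hxX with ⟨hxA, -⟩ | ⟨-, hxT⟩
        · exact hv2A hxA
        · exact hxT (Finset.mem_coe.mpr (Finset.mem_insert_of_mem h2)))
    have e1 : numCompIn G A S = numCompIn G A T := by
      rw [← hTS]
      exact eraseV_pendant hvA hv1A hadj1 huniq1 hvT
        (fun h => (Finset.mem_insert.mp h).elim hv1v h1)
    have e2 : numCompIn G B S = numCompIn G B T + 1 := by
      rw [← hTS]
      exact eraseV_isolated hvB hv2B huniq2 hvT (Finset.mem_insert_of_mem h2)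
    omega
  · -- neither : merge
    have hv1X : v1 ∈ ((↑A : Set V) \ ↑T) := ⟨hv1A, fun h => (Finset.mem_insert.mp h).elim hv1v h1⟩
    have hv2X : v2 ∈ ((↑B : Set V) \ ↑T) := ⟨hv2B, fun h => (Finset.mem_insert.mp h).elim hv2v h2⟩
    have hv1X' : v1 ∈ X := Or.inl hv1X
    have hv2X' : v2 ∈ X := Or.inr hv2X
    have hne : (G.induce X).connectedComponentMk ⟨v1, hv1X'⟩ ≠
        (G.induce X).connectedComponentMk ⟨v2, hv2X'⟩ :=
      splitEquiv_ne G _ _ hd hcross hv1X (fun h => hd v2 h hv2X)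
    have hstep := merge_card G X v v1 v2 hvX hv1X' hv2X' hadj1 hadj2 huniqX hne
    have e1 : numCompIn G A S = numCompIn G A T := by
      rw [← hTS]
      exact eraseV_pendant hvA hv1A hadj1 huniq1 hvT
        (fun h => (Finset.mem_insert.mp h).elim hv1v h1)
    have e2 : numCompIn G B S = numCompIn G B T := by
      rw [← hTS]
      exact eraseV_pendant hvB hv2B hadj2 huniq2 hvT
        (fun h => (Finset.mem_insert.mp h).elim hv2v h2)
    omega


/-- One direction: unmixedness of `G` gives unmixedness of the `A`-side. -/
lemma sideUnmixed (hcover : A ∪ B = Finset.univ) (hint : A ∩ B = {v})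
    (hsplit : ∀ a b, G.Adj a b → (a ∈ A ∧ b ∈ A) ∨ (a ∈ B ∧ b ∈ B))
    (hconn1 : (G.induce (↑A : Set V)).Connected)
    (hconn2 : (G.induce (↑B : Set V)).Connected)
    (hv1A : v1 ∈ A) (hv2B : v2 ∈ B) (hadj1 : G.Adj v v1) (hadj2 : G.Adj v v2)
    (huniq1 : ∀ w ∈ A, G.Adj v w → w = v1)
    (huniq2 : ∀ w ∈ B, G.Adj v w → w = v2)
    (hG : ∀ S : Finset V,
      (S = ∅ ∨ (S ≠ ∅ ∧ ∀ i ∈ S, numComp G (S.erase i) < numComp G S)) →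
        numComp G S = S.card + 1) :
    ∀ S : Finset V,
      (S ⊆ A ∧ (S = ∅ ∨ (S ≠ ∅ ∧ ∀ i ∈ S, numCompIn G A (S.erase i) < numCompIn G A S))) →
        numCompIn G A S = S.card + 1 := by
  have hmemv : ∀ x : V, x ∈ A → x ∈ B → x = v := by
    intro x hxA hxB
    have : x ∈ A ∩ B := Finset.mem_inter.mpr ⟨hxA, hxB⟩
    rw [hint] at this
    exact Finset.mem_singleton.mp this
  have hvA : v ∈ A := by
    have : v ∈ A ∩ B := hint ▸ Finset.mem_singleton_self v
    exact (Finset.mem_inter.mp this).1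
  rintro T ⟨hTA, rfl | ⟨hne, hcut⟩⟩
  · have hset : (↑A : Set V) \ ↑(∅ : Finset V) = ↑A := by simp
    unfold numCompIn
    rw [ncc_congr G hset, ncc_connected hconn1]
    simp
  · have hvT : v ∉ T := by
      intro hvT
      have hlt := hcut v hvT
      by_cases h1 : v1 ∈ T
      · rw [eraseV_isolated hvA hv1A huniq1 hvT h1] at hlt; omega
      · rw [eraseV_pendant hvA hv1A hadj1 huniq1 hvT h1] at hlt; omega
    have hBeq : ∀ U : Finset V, U ⊆ T → numCompIn G B U = 1 := by
      intro U hU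
      have hset : (↑B : Set V) \ ↑U = ↑B := by
        ext x
        simp only [Set.mem_diff, Finset.mem_coe]
        refine ⟨fun h => h.1, fun h => ⟨h, fun hxU => ?_⟩⟩
        have hxT := hU hxU
        exact hvT (hmemv x (hTA hxT) h ▸ hxT)
      unfold numCompIn
      rw [ncc_congr G hset]
      exact ncc_connected hconn2
    have key : ∀ U : Finset V, U ⊆ T → numComp G U = numCompIn G A U := by
      intro U hU
      have hvU : v ∉ U := fun h => hvT (hU h)
      have := compGlue hcover hint hsplit hv1A hv2B hadj1 hadj2 huniq1 huniq2 hvU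
      rw [hBeq U hU] at this
      omega
    have hGT := hG T (Or.inr ⟨hne, fun i hi => by
      rw [key (T.erase i) (Finset.erase_subset i T), key T Finset.Subset.rfl]
      exact hcut i hi⟩)
    rw [key T Finset.Subset.rfl] at hGT
    exact hGT

/-- Count on the `A`-side for a cut set of `G` containing `v`. -/
lemma sideCount (hvA : v ∈ A) (hv1A : v1 ∈ A) (hadj1 : G.Adj v v1)
    (huniq1 : ∀ w ∈ A, G.Adj v w → w = v1)
    (hA : ∀ S : Finset V,
      (S ⊆ A ∧ (S = ∅ ∨ (S ≠ ∅ ∧ ∀ i ∈ S, numCompIn G A (S.erase i) < numCompIn G A S))) →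
        numCompIn G A S = S.card + 1)
    {S : Finset V} (hvS : v ∈ S) (hv1S : v1 ∉ S)
    (hrel : ∀ i ∈ S, i ∈ A → i ≠ v → numCompIn G A (S.erase i) < numCompIn G A S) :
    numCompIn G A S = (S ∩ A).card := by
  classical
  set T₁ : Finset V := (S ∩ A).erase v with hT₁
  have hvSA : v ∈ S ∩ A := Finset.mem_inter.mpr ⟨hvS, hvA⟩
  have hv1SA : v1 ∉ S ∩ A := fun h => hv1S (Finset.mem_inter.mp h).1
  have hSA : numCompIn G A S = numCompIn G A (S ∩ A) := by
    unfold numCompIn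
    refine ncc_congr G ?_
    ext x
    simp only [Set.mem_diff, Finset.mem_coe, Finset.mem_inter]
    tauto
  have e0 : numCompIn G A T₁ = numCompIn G A (S ∩ A) :=
    eraseV_pendant hvA hv1A hadj1 huniq1 hvSA hv1SA
  have hT₁A : T₁ ⊆ A := fun i hi =>
    (Finset.mem_inter.mp (Finset.mem_of_mem_erase hi)).2
  have hAT₁ := hA T₁ ⟨hT₁A, by
    by_cases hemp : T₁ = ∅
    · exact Or.inl hemp
    · refine Or.inr ⟨hemp, fun i hi => ?_⟩
      have hiv : i ≠ v := (Finset.mem_erase.mp hi).1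
      have hiSA : i ∈ S ∩ A := Finset.mem_of_mem_erase hi
      have hiS : i ∈ S := (Finset.mem_inter.mp hiSA).1
      have hiA : i ∈ A := (Finset.mem_inter.mp hiSA).2
      have h1 : T₁.erase i = ((S.erase i) ∩ A).erase v := by
        ext x
        simp only [hT₁, Finset.mem_erase, Finset.mem_inter]
        tauto
      have hvSe : v ∈ (S.erase i) := Finset.mem_erase.mpr ⟨fun h => hiv h.symm, hvS⟩
      have hvSeA : v ∈ (S.erase i) ∩ A := Finset.mem_inter.mpr ⟨hvSe, hvA⟩
      have hv1SeA : v1 ∉ (S.erase i) ∩ A :=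
        fun h => hv1S (Finset.mem_of_mem_erase (Finset.mem_inter.mp h).1)
      have e1 : numCompIn G A (((S.erase i) ∩ A).erase v) = numCompIn G A ((S.erase i) ∩ A) :=
        eraseV_pendant hvA hv1A hadj1 huniq1 hvSeA hv1SeA
      have e2 : numCompIn G A ((S.erase i) ∩ A) = numCompIn G A (S.erase i) := by
        unfold numCompIn
        refine ncc_congr G ?_
        ext x
        simp only [Set.mem_diff, Finset.mem_coe, Finset.mem_inter]
        tauto
      have hlt := hrel i hiS hiA hiv
      rw [h1, e1, e2, e0, ← hSA]
      exact hlt⟩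
  have hcard : (S ∩ A).card = T₁.card + 1 := (Finset.card_erase_add_one hvSA).symm
  omega

/-- The other direction: unmixedness of both sides gives unmixedness of `G`. -/
lemma glueUnmixed (hcover : A ∪ B = Finset.univ) (hint : A ∩ B = {v})
    (hsplit : ∀ a b, G.Adj a b → (a ∈ A ∧ b ∈ A) ∨ (a ∈ B ∧ b ∈ B))
    (hconn1 : (G.induce (↑A : Set V)).Connected)
    (hconn2 : (G.induce (↑B : Set V)).Connected)
    (hv1A : v1 ∈ A) (hv2B : v2 ∈ B) (hadj1 : G.Adj v v1) (hadj2 : G.Adj v v2)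
    (huniq1 : ∀ w ∈ A, G.Adj v w → w = v1)
    (huniq2 : ∀ w ∈ B, G.Adj v w → w = v2)
    (hA : ∀ S : Finset V,
      (S ⊆ A ∧ (S = ∅ ∨ (S ≠ ∅ ∧ ∀ i ∈ S, numCompIn G A (S.erase i) < numCompIn G A S))) →
        numCompIn G A S = S.card + 1)
    (hB : ∀ S : Finset V,
      (S ⊆ B ∧ (S = ∅ ∨ (S ≠ ∅ ∧ ∀ i ∈ S, numCompIn G B (S.erase i) < numCompIn G B S))) →
        numCompIn G B S = S.card + 1) :
    ∀ S : Finset V,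
      (S = ∅ ∨ (S ≠ ∅ ∧ ∀ i ∈ S, numComp G (S.erase i) < numComp G S)) →
        numComp G S = S.card + 1 := by
  classical
  have hmemv : ∀ x : V, x ∈ A → x ∈ B → x = v := by
    intro x hxA hxB
    have : x ∈ A ∩ B := Finset.mem_inter.mpr ⟨hxA, hxB⟩
    rw [hint] at this
    exact Finset.mem_singleton.mp this
  have hvA : v ∈ A := by
    have : v ∈ A ∩ B := hint ▸ Finset.mem_singleton_self v
    exact (Finset.mem_inter.mp this).1
  have hvB : v ∈ B := by
    have : v ∈ A ∩ B := hint ▸ Finset.mem_singleton_self v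
    exact (Finset.mem_inter.mp this).2
  have hv1v : v1 ≠ v := fun h => G.irrefl (h ▸ hadj1)
  have hv2v : v2 ≠ v := fun h => G.irrefl (h ▸ hadj2)
  have hAone : numCompIn G A (∅ : Finset V) = 1 := by
    have hset : (↑A : Set V) \ ↑(∅ : Finset V) = ↑A := by simp
    unfold numCompIn
    rw [ncc_congr G hset]
    exact ncc_connected hconn1
  have hBone : numCompIn G B (∅ : Finset V) = 1 := by
    have hset : (↑B : Set V) \ ↑(∅ : Finset V) = ↑B := by simp
    unfold numCompIn
    rw [ncc_congr G hset]
    exact ncc_connected hconn2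
  rintro S (rfl | ⟨hne, hcut⟩)
  · have := compGlue hcover hint hsplit hv1A hv2B hadj1 hadj2 huniq1 huniq2
      (Finset.notMem_empty v)
    rw [hAone, hBone] at this
    simpa using this
  · by_cases hvS : v ∈ S
    · -- v ∈ S : show v1, v2 ∉ S first
      have hstep := hcut v hvS
      have hsetS : ((↑(S.erase v) : Set V))ᶜ = insert v ((↑S : Set V)ᶜ) := by
        ext x
        simp only [Set.mem_compl_iff, Finset.mem_coe, Finset.mem_erase, Set.mem_insert_iff]
        by_cases hxv : x = v
        · subst hxv; simp [hvS]
        · simp [hxv]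
      have hvSc : v ∉ ((↑S : Set V)ᶜ) := fun h => h (Finset.mem_coe.mpr hvS)
      have huniqS : ∀ x ∈ ((↑S : Set V)ᶜ), G.Adj v x → x = v1 ∨ x = v2 := by
        intro x _ h
        have hx : x ∈ A ∪ B := hcover ▸ Finset.mem_univ x
        rw [Finset.mem_union] at hx
        rcases hx with hxA | hxB
        · exact Or.inl (huniq1 x hxA h)
        · exact Or.inr (huniq2 x hxB h)
      have herase : numComp G (S.erase v) =
          Nat.card (G.induce (insert v ((↑S : Set V)ᶜ))).ConnectedComponent := by
        unfold numComp
        exact ncc_congr G hsetS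
      have hv12 : v1 ∉ S ∧ v2 ∉ S := by
        by_cases h1 : v1 ∈ S <;> by_cases h2 : v2 ∈ S
        · exfalso
          have := isolated_card G _ v hvSc (by
            intro x hx h
            rcases huniqS x hx h with rfl | rfl
            · exact hx (Finset.mem_coe.mpr h1)
            · exact hx (Finset.mem_coe.mpr h2))
          rw [herase] at hstep
          unfold numComp at hstep
          omega
        · exfalso
          have := pendant_card G _ v v2 hvSc (fun h => h2 (Finset.mem_coe.mp h)) hadj2 (by
            intro x hx h
            rcases huniqS x hx h with rfl | rfl
            · exact absurd (Finset.mem_coe.mpr h1) hx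
            · rfl)
          rw [herase] at hstep
          unfold numComp at hstep
          omega
        · exfalso
          have := pendant_card G _ v v1 hvSc (fun h => h1 (Finset.mem_coe.mp h)) hadj1 (by
            intro x hx h
            rcases huniqS x hx h with rfl | rfl
            · rfl
            · exact absurd (Finset.mem_coe.mpr h2) hx)
          rw [herase] at hstep
          unfold numComp at hstep
          omega
        · exact ⟨h1, h2⟩
      obtain ⟨hv1S, hv2S⟩ := hv12
      have hL2 := compSplit hcover hint hsplit hvS
      have hrelA : ∀ i ∈ S, i ∈ A → i ≠ v →
          numCompIn G A (S.erase i) < numCompIn G A S := by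
        intro i hiS hiA hiv
        have hvSe : v ∈ S.erase i := Finset.mem_erase.mpr ⟨fun h => hiv h.symm, hvS⟩
        have hL2' := compSplit hcover hint hsplit hvSe
        have hiB : i ∉ B := fun h => hiv (hmemv i hiA h)
        have hBeq : numCompIn G B (S.erase i) = numCompIn G B S := by
          unfold numCompIn
          refine ncc_congr G ?_
          ext x
          simp only [Set.mem_diff, Finset.mem_coe, Finset.mem_erase]
          constructor
          · rintro ⟨hxB, hx⟩
            exact ⟨hxB, fun hxS => hx ⟨fun h => hiB (h ▸ hxB), hxS⟩⟩
          · rintro ⟨hxB, hxS⟩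
            exact ⟨hxB, fun h => hxS h.2⟩
        have := hcut i hiS
        omega
      have hrelB : ∀ i ∈ S, i ∈ B → i ≠ v →
          numCompIn G B (S.erase i) < numCompIn G B S := by
        intro i hiS hiB hiv
        have hvSe : v ∈ S.erase i := Finset.mem_erase.mpr ⟨fun h => hiv h.symm, hvS⟩
        have hL2' := compSplit hcover hint hsplit hvSe
        have hiA : i ∉ A := fun h => hiv (hmemv i h hiB)
        have hAeq : numCompIn G A (S.erase i) = numCompIn G A S := by
          unfold numCompIn
          refine ncc_congr G ?_
          ext x
          simp only [Set.mem_diff, Finset.mem_coe, Finset.mem_erase]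
          constructor
          · rintro ⟨hxA, hx⟩
            exact ⟨hxA, fun hxS => hx ⟨fun h => hiA (h ▸ hxA), hxS⟩⟩
          · rintro ⟨hxA, hxS⟩
            exact ⟨hxA, fun h => hxS h.2⟩
        have := hcut i hiS
        omega
      have cA := sideCount hvA hv1A hadj1 huniq1 hA hvS hv1S hrelA
      have cB := sideCount hvB hv2B hadj2 huniq2 hB hvS hv2S hrelB
      have hu : (S ∩ A) ∪ (S ∩ B) = S := by
        ext x
        have hx : x ∈ A ∪ B := hcover ▸ Finset.mem_univ x
        rw [Finset.mem_union] at hx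
        simp only [Finset.mem_union, Finset.mem_inter]
        tauto
      have hi : (S ∩ A) ∩ (S ∩ B) = {v} := by
        ext x
        simp only [Finset.mem_inter, Finset.mem_singleton]
        constructor
        · rintro ⟨⟨hxS, hxA⟩, -, hxB⟩
          exact hmemv x hxA hxB
        · rintro rfl
          exact ⟨⟨hvS, hvA⟩, hvS, hvB⟩
      have hcards := Finset.card_union_add_card_inter (S ∩ A) (S ∩ B)
      rw [hu, hi, Finset.card_singleton] at hcards
      rw [hL2, cA, cB]
      omega
    · -- v ∉ S
      have hGlue := compGlue hcover hint hsplit hv1A hv2B hadj1 hadj2 huniq1 huniq2 hvS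
      have hAeq : numCompIn G A S = numCompIn G A (S ∩ A) := by
        unfold numCompIn
        refine ncc_congr G ?_
        ext x
        simp only [Set.mem_diff, Finset.mem_coe, Finset.mem_inter]
        tauto
      have hBeq : numCompIn G B S = numCompIn G B (S ∩ B) := by
        unfold numCompIn
        refine ncc_congr G ?_
        ext x
        simp only [Set.mem_diff, Finset.mem_coe, Finset.mem_inter]
        tauto
      have hrelA : ∀ i ∈ S ∩ A,
          numCompIn G A ((S ∩ A).erase i) < numCompIn G A (S ∩ A) := by
        intro i hi
        have hiS : i ∈ S := (Finset.mem_inter.mp hi).1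
        have hiA : i ∈ A := (Finset.mem_inter.mp hi).2
        have hiv : i ≠ v := fun h => hvS (h ▸ hiS)
        have hvSe : v ∉ S.erase i := fun h => hvS (Finset.mem_of_mem_erase h)
        have hGlue' := compGlue hcover hint hsplit hv1A hv2B hadj1 hadj2 huniq1 huniq2 hvSe
        have hiB : i ∉ B := fun h => hiv (hmemv i hiA h)
        have hBeq' : numCompIn G B (S.erase i) = numCompIn G B S := by
          unfold numCompIn
          refine ncc_congr G ?_
          ext x
          simp only [Set.mem_diff, Finset.mem_coe, Finset.mem_erase]
          constructor
          · rintro ⟨hxB, hx⟩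
            exact ⟨hxB, fun hxS => hx ⟨fun h => hiB (h ▸ hxB), hxS⟩⟩
          · rintro ⟨hxB, hxS⟩
            exact ⟨hxB, fun h => hxS h.2⟩
        have hAeq' : numCompIn G A ((S ∩ A).erase i) = numCompIn G A (S.erase i) := by
          unfold numCompIn
          refine ncc_congr G ?_
          ext x
          simp only [Set.mem_diff, Finset.mem_coe, Finset.mem_erase, Finset.mem_inter]
          tauto
        have := hcut i hiS
        omega
      have hrelB : ∀ i ∈ S ∩ B,
          numCompIn G B ((S ∩ B).erase i) < numCompIn G B (S ∩ B) := by
        intro i hi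
        have hiS : i ∈ S := (Finset.mem_inter.mp hi).1
        have hiB : i ∈ B := (Finset.mem_inter.mp hi).2
        have hiv : i ≠ v := fun h => hvS (h ▸ hiS)
        have hvSe : v ∉ S.erase i := fun h => hvS (Finset.mem_of_mem_erase h)
        have hGlue' := compGlue hcover hint hsplit hv1A hv2B hadj1 hadj2 huniq1 huniq2 hvSe
        have hiA : i ∉ A := fun h => hiv (hmemv i h hiB)
        have hAeq' : numCompIn G A (S.erase i) = numCompIn G A S := by
          unfold numCompIn
          refine ncc_congr G ?_
          ext x
          simp only [Set.mem_diff, Finset.mem_coe, Finset.mem_erase]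
          constructor
          · rintro ⟨hxA, hx⟩
            exact ⟨hxA, fun hxS => hx ⟨fun h => hiA (h ▸ hxA), hxS⟩⟩
          · rintro ⟨hxA, hxS⟩
            exact ⟨hxA, fun h => hxS h.2⟩
        have hBeq' : numCompIn G B ((S ∩ B).erase i) = numCompIn G B (S.erase i) := by
          unfold numCompIn
          refine ncc_congr G ?_
          ext x
          simp only [Set.mem_diff, Finset.mem_coe, Finset.mem_erase, Finset.mem_inter]
          tauto
        have := hcut i hiS
        omega
      have h1 : numCompIn G A (S ∩ A) = (S ∩ A).card + 1 := by
        refine hA (S ∩ A) ⟨Finset.inter_subset_right, ?_⟩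
        by_cases hemp : S ∩ A = ∅
        · exact Or.inl hemp
        · exact Or.inr ⟨hemp, hrelA⟩
      have h2 : numCompIn G B (S ∩ B) = (S ∩ B).card + 1 := by
        refine hB (S ∩ B) ⟨Finset.inter_subset_right, ?_⟩
        by_cases hemp : S ∩ B = ∅
        · exact Or.inl hemp
        · exact Or.inr ⟨hemp, hrelB⟩
      have hu : (S ∩ A) ∪ (S ∩ B) = S := by
        ext x
        have hx : x ∈ A ∪ B := hcover ▸ Finset.mem_univ x
        rw [Finset.mem_union] at hx
        simp only [Finset.mem_union, Finset.mem_inter]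
        tauto
      have hi : (S ∩ A) ∩ (S ∩ B) = ∅ := by
        ext x
        simp only [Finset.mem_inter, Finset.notMem_empty, iff_false]
        rintro ⟨⟨hxS, hxA⟩, -, hxB⟩
        exact hvS (hmemv x hxA hxB ▸ hxS)
      have hcards := Finset.card_union_add_card_inter (S ∩ A) (S ∩ B)
      rw [hu, hi, Finset.card_empty] at hcards
      omega

end App
end Aux

/-- with `G = G₁ ∗ G₂` as in the gluing construction (leaves identified at `v`),
the unmixedness condition holds for `G` iff it holds for both `G₁` and `G₂`. -/
theorem stmt10 {V : Type*} [Fintype V] [DecidableEq V] (G : SimpleGraph V)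
    (A B : Finset V) (v v1 v2 : V)
    (hcover : A ∪ B = Finset.univ) (hint : A ∩ B = {v})
    (hsplit : ∀ a b, G.Adj a b → (a ∈ A ∧ b ∈ A) ∨ (a ∈ B ∧ b ∈ B))
    (hconn1 : (G.induce (↑A : Set V)).Connected)
    (hconn2 : (G.induce (↑B : Set V)).Connected)
    (hv1A : v1 ∈ A) (hv2B : v2 ∈ B) (hadj1 : G.Adj v v1) (hadj2 : G.Adj v v2)
    (huniq1 : ∀ w ∈ A, G.Adj v w → w = v1)
    (huniq2 : ∀ w ∈ B, G.Adj v w → w = v2) :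
    (∀ S : Finset V, IsCutSet G S → numComp G S = S.card + 1) ↔
      ((∀ S : Finset V, IsCutSetIn G A S → numCompIn G A S = S.card + 1) ∧
       (∀ S : Finset V, IsCutSetIn G B S → numCompIn G B S = S.card + 1)) := by
  constructor
  · intro hG
    have hG' : ∀ S : Finset V,
        (S = ∅ ∨ (S ≠ ∅ ∧ ∀ i ∈ S, numComp G (S.erase i) < numComp G S)) →
          numComp G S = S.card + 1 := fun S h => hG S h
    have hcover' : B ∪ A = Finset.univ := by rwa [Finset.union_comm]
    have hint' : B ∩ A = {v} := by rwa [Finset.inter_comm]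
    have hsplit' : ∀ a b, G.Adj a b → (a ∈ B ∧ b ∈ B) ∨ (a ∈ A ∧ b ∈ A) :=
      fun a b h => (hsplit a b h).symm
    exact ⟨fun S hS => sideUnmixed hcover hint hsplit hconn1 hconn2 hv1A hv2B hadj1 hadj2
        huniq1 huniq2 hG' S hS,
      fun S hS => sideUnmixed hcover' hint' hsplit' hconn2 hconn1 hv2B hv1A hadj2 hadj1
        huniq2 huniq1 hG' S hS⟩
  · rintro ⟨hA, hB⟩ S hS
    exact glueUnmixed hcover hint hsplit hconn1 hconn2 hv1A hv2B hadj1 hadj2 huniq1 huniq2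
      (fun S h => hA S h) (fun S h => hB S h) S hS
end

section
/- Let G = G_1 ∘ G_2 where G_i has a leaf f_i with neighbour v_i of degree at least 3 in G_i, obtained by deleting f_1, f_2 and identifying v_1 with v_2 into a vertex v. Suppose that for i = 1, 2 there exists u_i ∈ N_{G_i}(v) with deg_{G_i}(u_i) = 2. Then the cut sets of G are exactly the sets S_1 ∪ S_2 where S_i is a cut set of G_i (i = 1,2) and either v ∉ S_1 ∪ S_2, or S_1 ∩ S_2 = {v}. -/
open SimpleGraph Finset

/-- Vertex set of `(G₁,f₁) ∘ (G₂,f₂)`: the leaves `f₁, f₂` are removed and `v₁` is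
identified with `v₂` (the copy of `v₂` is dropped, `v₁` playing the role of `v`). -/
abbrev GlueV {V₁ V₂ : Type*} (f1 : V₁) (f2 v2 : V₂) : Type _ :=
  {x : V₁ // x ≠ f1} ⊕ {x : V₂ // x ≠ f2 ∧ x ≠ v2}

/-- The graph `(G₁,f₁) ∘ (G₂,f₂)`. -/
def glueGraph {V₁ V₂ : Type*} (Γ1 : SimpleGraph V₁) (Γ2 : SimpleGraph V₂)
    (f1 v1 : V₁) (f2 v2 : V₂) : SimpleGraph (GlueV f1 f2 v2) :=
  SimpleGraph.fromRel (fun x y =>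
    match x, y with
    | Sum.inl a, Sum.inl b => Γ1.Adj a.1 b.1
    | Sum.inr a, Sum.inr b => Γ2.Adj a.1 b.1
    | Sum.inl a, Sum.inr b => a.1 = v1 ∧ Γ2.Adj v2 b.1
    | Sum.inr a, Sum.inl b => b.1 = v1 ∧ Γ2.Adj v2 a.1)

/-- The subset of `V₁` corresponding to a set of vertices of the glued graph
(`S ∩ V(G₁)`, with `v` read as `v₁`). -/
def leftPart {V₁ V₂ : Type*} [DecidableEq V₁] {f1 : V₁} {f2 v2 : V₂}
    (S : Finset (GlueV f1 f2 v2)) : Finset V₁ :=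
  S.biUnion (fun z => match z with
    | Sum.inl a => {a.1}
    | Sum.inr _ => (∅ : Finset V₁))

/-- The subset of `V₂` corresponding to a set of vertices of the glued graph
(`S ∩ V(G₂)`, with `v` read as `v₂`). -/
def rightPart {V₁ V₂ : Type*} [DecidableEq V₁] [DecidableEq V₂] (v1 : V₁) {f1 : V₁}
    {f2 v2 : V₂} (S : Finset (GlueV f1 f2 v2)) : Finset V₂ :=
  S.biUnion (fun z => match z with
    | Sum.inl a => if a.1 = v1 then {v2} else (∅ : Finset V₂)
    | Sum.inr b => {b.1})

/-- The subset of the glued graph corresponding to a subset `S1 ⊆ V₁`. -/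
def liftLeft {V₁ V₂ : Type*} [DecidableEq V₁] [DecidableEq V₂] {f1 : V₁} {f2 v2 : V₂}
    (S1 : Finset V₁) : Finset (GlueV f1 f2 v2) :=
  S1.biUnion (fun a => if h : a ≠ f1 then {Sum.inl ⟨a, h⟩} else ∅)

/-- The subset of the glued graph corresponding to a subset `S2 ⊆ V₂`
(`v₂` being read as `v`, i.e. as `v₁`). -/
def liftRight {V₁ V₂ : Type*} [DecidableEq V₁] [DecidableEq V₂] {f1 v1 : V₁} {f2 v2 : V₂}
    (hne1 : v1 ≠ f1) (S2 : Finset V₂) : Finset (GlueV f1 f2 v2) :=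
  S2.biUnion (fun b =>
    if h : b ≠ f2 ∧ b ≠ v2 then {Sum.inr ⟨b, h⟩}
    else if b = v2 then {Sum.inl ⟨v1, hne1⟩} else ∅)

/-! A vertex set `S` is a cut set iff every `i ∈ S` has two neighbours lying in different
components of `G - S`. Each `Gᵢ` embeds into `G` with its leaf `fᵢ` collapsed onto `v`, and `G`
retracts onto `Gᵢ` by sending the other side to the leaf `fᵢ`; both maps preserve connectivity
away from the cut, so this condition transfers between `G` and `Gᵢ` at every vertex other than
`v`. At `v` itself: if `v ∈ S` it separates the two sides of `G`; conversely `vᵢ ∈ Sᵢ` separates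
`fᵢ` from the rest of `Gᵢ` unless all other neighbours of `vᵢ` are in `Sᵢ`, and this is ruled out
by the neighbour `uᵢ` of degree two, which would then have a single neighbour outside `S`. -/

namespace SimpleGraph

variable {V W : Type*} (G : SimpleGraph V) {H : SimpleGraph W}

/-- `G` with every edge at `s` removed. Off `s` its reachability is that of `G.induce sᶜ`
(`reachable_induce_compl_iff`), but it keeps the vertex type, so maps between such graphs need no
membership proofs. -/
def isolate (s : Set V) : SimpleGraph V where
  Adj x y := G.Adj x y ∧ x ∉ s ∧ y ∉ s
  symm := ⟨fun _ _ h => ⟨h.1.symm, h.2.2, h.2.1⟩⟩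
  loopless := ⟨fun x h => G.loopless.irrefl x h.1⟩

def Reconnects (s : Set V) (i : V) : Prop :=
  ∃ x y, x ∉ s ∧ y ∉ s ∧ G.Adj i x ∧ G.Adj i y ∧ ¬ (G.isolate s).Reachable x y

variable {G}

lemma Reachable.map_of_adj (φ : V → W) (h : ∀ a b, G.Adj a b → H.Reachable (φ a) (φ b))
    {a b : V} (hr : G.Reachable a b) : H.Reachable (φ a) (φ b) := by
  rw [reachable_iff_reflTransGen] at hr ⊢
  exact hr.lift' φ fun a b hab => (reachable_iff_reflTransGen _ _).1 (h a b hab)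

lemma reachable_induce_compl_iff {s : Set V} {x y : ↥sᶜ} :
    (G.induce sᶜ).Reachable x y ↔ (G.isolate s).Reachable x y := by
  classical
  refine ⟨fun hr => hr.map_of_adj (H := G.isolate s) Subtype.val fun a b hab =>
    Adj.reachable ⟨hab, a.2, b.2⟩, fun hr => ?_⟩
  let φ : V → ↥sᶜ := fun z => if hz : z ∈ sᶜ then ⟨z, hz⟩ else x
  have hφ : ∀ z : ↥sᶜ, φ z = z := fun z => dif_pos z.2
  rw [← hφ x, ← hφ y]
  refine hr.map_of_adj φ fun a b hab => Adj.reachable ?_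
  obtain ⟨hab, ha, hb⟩ := hab
  simpa [φ, ha, hb] using hab

lemma Reconnects.exists_adj_notMem_ne {s : Set V} {i : V} (h : G.Reconnects s i) (f : V) :
    ∃ x, G.Adj i x ∧ x ∉ s ∧ x ≠ f := by
  obtain ⟨x, y, hx, hy, hix, hiy, hxy⟩ := h
  by_cases hxf : x = f
  · exact ⟨y, hiy, hy, fun hyf => hxy (hxf.trans hyf.symm ▸ Reachable.refl _)⟩
  · exact ⟨x, hix, hx, hxf⟩

lemma reachable_isolate_of_not_reconnects {s : Set V} {i x y : V} (h : ¬ G.Reconnects s i)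
    (hx : x ≠ i) (hy : y ≠ i) (hr : (G.isolate (s \ {i})).Reachable x y) :
    (G.isolate s).Reachable x y := by
  classical
  -- retract `i` onto one of its neighbours outside `s`, all of which are joined in `G - s`
  obtain ⟨n, hn⟩ : ∃ n, ∀ b, G.Adj i b → b ∉ s → (G.isolate s).Reachable n b := by
    by_cases hex : ∃ n, G.Adj i n ∧ n ∉ s
    · obtain ⟨n, hin, hns⟩ := hex
      exact ⟨n, fun b hib hbs => by_contra fun hnb => h ⟨n, b, hns, hbs, hin, hib, hnb⟩⟩
    · push Not at hex
      exact ⟨i, fun b hib hbs => absurd (hex b hib) hbs⟩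
  have hr' := hr.map_of_adj (H := G.isolate s) (Function.update id i n) fun a b hab => by
    obtain ⟨hab, ha, hb⟩ := hab
    rcases eq_or_ne a i with rfl | hai
    · simpa [hab.ne'] using hn b hab (by simpa [hab.ne'] using hb)
    rcases eq_or_ne b i with rfl | hbi
    · simpa [hab.ne] using (hn a hab.symm (by simpa [hab.ne] using ha)).symm
    · have : (G.isolate s).Adj a b := ⟨hab, by simpa [hai] using ha, by simpa [hbi] using hb⟩
      simpa [hai, hbi] using this.reachable
  simpa [hx, hy] using hr'

variable {s : Set V} {f u v x y : V}

lemma eq_of_adj_of_degree_eq_one [Fintype (G.neighborSet f)] (hf : G.degree f = 1)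
    (hv : G.Adj f v) (hx : G.Adj f x) : x = v :=
  (degree_eq_one_iff_existsUnique_adj.1 hf).unique hx hv

lemma eq_of_adj_of_degree_eq_two [DecidableEq V] [Fintype (G.neighborSet u)]
    (hu : G.degree u = 2) (hv : G.Adj u v) (hx : G.Adj u x) (hy : G.Adj u y)
    (hxv : x ≠ v) (hyv : y ≠ v) : x = y := by
  by_contra hxy
  have hsub : ({v, x, y} : Finset V) ⊆ G.neighborFinset u := by
    simp [Finset.insert_subset_iff, hv, hx, hy]
  have := Finset.card_le_card hsub
  rw [card_neighborFinset_eq_degree, hu,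
    Finset.card_insert_of_notMem (by simp [hxv.symm, hyv.symm]), Finset.card_pair hxy] at this
  omega

lemma eq_of_reachable_isolate_of_degree_eq_one [Fintype (G.neighborSet f)]
    (hf : G.degree f = 1) (hv : G.Adj f v) (hvs : v ∈ s) (hr : (G.isolate s).Reachable x f) :
    x = f := by
  rw [reachable_iff_reflTransGen] at hr
  rcases hr.cases_tail with h | ⟨c, -, hc, hcs, -⟩
  · exact h.symm
  · exact absurd (eq_of_adj_of_degree_eq_one hf hv hc.symm ▸ hvs) hcs

end SimpleGraph

section CutSet

variable {V : Type*} [Fintype V] [DecidableEq V] {G : SimpleGraph V}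

theorem numComp_erase_lt_iff {S : Finset V} {i : V} (hi : i ∈ S) :
    numComp G (S.erase i) < numComp G S ↔ G.Reconnects S i := by
  have hsub : (↑S : Set V)ᶜ ⊆ (↑(S.erase i) : Set V)ᶜ :=
    Set.compl_subset_compl.2 (Finset.coe_subset.2 (Finset.erase_subset i S))
  let ψ := ConnectedComponent.map (G.induceHomOfLE hsub).toHom
  have hψ : ∀ x y : ↥(↑S : Set V)ᶜ,
      ψ (connectedComponentMk _ x) = ψ (connectedComponentMk _ y) ↔
        (G.isolate (↑S \ {i})).Reachable x y := by
    intro x y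
    simp only [ψ, ConnectedComponent.map_mk, ConnectedComponent.eq, ← Finset.coe_erase]
    exact reachable_induce_compl_iff
  have : Fintype (G.induce (↑S : Set V)ᶜ).ConnectedComponent := Fintype.ofFinite _
  have : Fintype (G.induce (↑(S.erase i) : Set V)ᶜ).ConnectedComponent := Fintype.ofFinite _
  simp only [numComp, Nat.card_eq_fintype_card]
  constructor
  · intro hlt
    by_contra h
    refine (Fintype.card_le_of_injective ψ ?_).not_gt hlt
    refine ConnectedComponent.ind₂ fun x y hxy => ConnectedComponent.sound ?_
    rw [reachable_induce_compl_iff]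
    exact reachable_isolate_of_not_reconnects h (fun e => x.2 (e ▸ hi))
      (fun e => y.2 (e ▸ hi)) ((hψ x y).1 hxy)
  · rintro ⟨x, y, hx, hy, hix, hiy, hxy⟩
    refine Fintype.card_lt_of_surjective_not_injective ψ ?_ fun hinj => hxy ?_
    · refine ConnectedComponent.ind fun z => ?_
      by_cases hz : z.1 = i
      · refine ⟨connectedComponentMk _ ⟨x, hx⟩, ConnectedComponent.sound ?_⟩
        rw [reachable_induce_compl_iff]
        have : (G.isolate (↑(S.erase i))).Adj x z :=
          ⟨by rw [hz]; exact hix.symm, by simp_all, by simp [hz]⟩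
        exact this.reachable
      · exact ⟨connectedComponentMk _ ⟨z, by simpa [hz] using z.2⟩, rfl⟩
    · have hxi : (G.isolate (↑S \ {i})).Adj x i := ⟨hix.symm, by simp_all, by simp⟩
      have hiy : (G.isolate (↑S \ {i})).Adj i y := ⟨hiy, by simp, by simp_all⟩
      have := hinj ((hψ ⟨x, hx⟩ ⟨y, hy⟩).2 (hxi.reachable.trans hiy.reachable))
      exact reachable_induce_compl_iff.1 (ConnectedComponent.exact this)

theorem isCutSet_iff {S : Finset V} : IsCutSet G S ↔ ∀ i ∈ S, G.Reconnects S i := by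
  have : IsCutSet G S ↔ ∀ i ∈ S, numComp G (S.erase i) < numComp G S := by
    rcases S.eq_empty_or_nonempty with rfl | hS
    · simp [IsCutSet]
    · simp [IsCutSet, hS.ne_empty]
  rw [this]
  exact forall₂_congr fun i hi => numComp_erase_lt_iff hi

lemma notMem_of_isCutSet_of_degree_eq_one [DecidableRel G.Adj] {S : Finset V} {f v : V}
    (hf : G.degree f = 1) (hv : G.Adj f v) (hS : IsCutSet G S) : f ∉ S := by
  intro hfS
  obtain ⟨x, y, -, -, hx, hy, hxy⟩ := isCutSet_iff.1 hS f hfS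
  rw [eq_of_adj_of_degree_eq_one hf hv hx, eq_of_adj_of_degree_eq_one hf hv hy] at hxy
  exact hxy (Reachable.refl _)

end CutSet

/-- `Γ`, with its leaf `f` at `v`, is one side of `G`, and `Γ - T` is the corresponding side of
`G - S`: `inj` embeds `Γ` with `f` collapsed onto `v`, and `proj` retracts `G` onto `Γ`. -/
structure GlueSide {U W : Type*} (G : SimpleGraph W) (S : Set W) (Γ : SimpleGraph U)
    (f v : U) (T : Set U) (inj : U → W) (proj : W → U) : Prop where
  leaf_notMem : f ∉ T
  inj_leaf : inj f = inj v
  proj_inj : ∀ a, a ≠ f → proj (inj a) = a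
  inj_mem_iff : ∀ a, a ≠ f → (inj a ∈ S ↔ a ∈ T)
  adj_inj_iff : ∀ a b, a ≠ f → b ≠ f → (G.Adj (inj a) (inj b) ↔ Γ.Adj a b)
  exists_inj_eq_of_adj : ∀ j z, j ≠ f → j ≠ v → G.Adj (inj j) z → ∃ a, a ≠ f ∧ inj a = z
  reachable_proj : ∀ z w, (G.isolate S).Reachable z w → (Γ.isolate T).Reachable (proj z) (proj w)

namespace GlueSide

variable {U W : Type*} {G : SimpleGraph W} {S : Set W} {Γ : SimpleGraph U} {f v : U} {T : Set U}
  {inj : U → W} {proj : W → U} [Γ.LocallyFinite]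

lemma reachable_inj (hs : GlueSide G S Γ f v T inj proj) (hf : Γ.degree f = 1) (hv : Γ.Adj f v)
    {a b : U} (h : (Γ.isolate T).Reachable a b) : (G.isolate S).Reachable (inj a) (inj b) := by
  refine h.map_of_adj inj fun a b hab => ?_
  obtain ⟨hab, haT, hbT⟩ := hab
  rcases eq_or_ne a f with rfl | haf
  · rw [eq_of_adj_of_degree_eq_one hf hv hab, hs.inj_leaf]
  rcases eq_or_ne b f with rfl | hbf
  · rw [eq_of_adj_of_degree_eq_one hf hv hab.symm, hs.inj_leaf]
  exact Adj.reachable ⟨(hs.adj_inj_iff a b haf hbf).2 hab, (hs.inj_mem_iff a haf).not.2 haT,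
    (hs.inj_mem_iff b hbf).not.2 hbT⟩

lemma reconnects_of_reconnects_inj (hs : GlueSide G S Γ f v T inj proj) (hf : Γ.degree f = 1)
    (hv : Γ.Adj f v) {j : U} (hjf : j ≠ f) (hjv : j ≠ v) (h : G.Reconnects S (inj j)) :
    Γ.Reconnects T j := by
  obtain ⟨x, y, hxS, hyS, hjx, hjy, hxy⟩ := h
  obtain ⟨a, haf, rfl⟩ := hs.exists_inj_eq_of_adj j x hjf hjv hjx
  obtain ⟨b, hbf, rfl⟩ := hs.exists_inj_eq_of_adj j y hjf hjv hjy
  exact ⟨a, b, (hs.inj_mem_iff a haf).not.1 hxS, (hs.inj_mem_iff b hbf).not.1 hyS,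
    (hs.adj_inj_iff j a hjf haf).1 hjx, (hs.adj_inj_iff j b hjf hbf).1 hjy,
    fun hr => hxy (hs.reachable_inj hf hv hr)⟩

lemma reconnects_inj (hs : GlueSide G S Γ f v T inj proj) (hf : Γ.degree f = 1)
    (hv : Γ.Adj f v) {j : U} (hjf : j ≠ f) (hjv : j ≠ v) (h : Γ.Reconnects T j) :
    G.Reconnects S (inj j) := by
  obtain ⟨x, y, hxT, hyT, hjx, hjy, hxy⟩ := h
  have hxf : x ≠ f := by rintro rfl; exact hjv (eq_of_adj_of_degree_eq_one hf hv hjx.symm)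
  have hyf : y ≠ f := by rintro rfl; exact hjv (eq_of_adj_of_degree_eq_one hf hv hjy.symm)
  refine ⟨inj x, inj y, (hs.inj_mem_iff x hxf).not.2 hxT, (hs.inj_mem_iff y hyf).not.2 hyT,
    (hs.adj_inj_iff j x hjf hxf).2 hjx, (hs.adj_inj_iff j y hjf hyf).2 hjy, fun hr => hxy ?_⟩
  simpa only [hs.proj_inj x hxf, hs.proj_inj y hyf] using hs.reachable_proj _ _ hr

lemma reconnects_hinge [DecidableEq U] {u : U}
    (hs : GlueSide G S Γ f v T inj proj) (hf : Γ.degree f = 1) (hv : Γ.Adj f v)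
    (hvu : Γ.Adj v u) (hu : Γ.degree u = 2) (hvT : v ∈ T) (hG : ∀ z ∈ S, G.Reconnects S z) :
    Γ.Reconnects T v := by
  by_cases hex : ∃ x, Γ.Adj v x ∧ x ∉ T ∧ x ≠ f
  · obtain ⟨x, hvx, hxT, hxf⟩ := hex
    exact ⟨x, f, hxT, hs.leaf_notMem, hvx, hv.symm,
      fun hr => hxf (eq_of_reachable_isolate_of_degree_eq_one hf hv hvT hr)⟩
  -- otherwise `u ∈ T`, yet `inj u` has only one neighbour outside `S`: the image of the
  -- neighbour of `u` other than `v`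
  push Not at hex
  have huf : u ≠ f := by rintro rfl; omega
  have huv : u ≠ v := hvu.ne'
  have hvf : v ≠ f := hv.ne'
  have huT : u ∈ T := by_contra fun h => huf (hex u hvu h)
  obtain ⟨x, y, hxS, hyS, hux, huy, hxy⟩ := hG (inj u) ((hs.inj_mem_iff u huf).2 huT)
  obtain ⟨a, haf, rfl⟩ := hs.exists_inj_eq_of_adj u x huf huv hux
  obtain ⟨b, hbf, rfl⟩ := hs.exists_inj_eq_of_adj u y huf huv huy
  have hav : a ≠ v := by rintro rfl; exact hxS ((hs.inj_mem_iff a hvf).2 hvT)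
  have hbv : b ≠ v := by rintro rfl; exact hyS ((hs.inj_mem_iff b hvf).2 hvT)
  have hab : a = b := eq_of_adj_of_degree_eq_two hu hvu.symm ((hs.adj_inj_iff u a huf haf).1 hux)
    ((hs.adj_inj_iff u b huf hbf).1 huy) hav hbv
  exact (hxy (hab ▸ Reachable.refl _)).elim

end GlueSide

namespace GlueSide

variable {U W : Type*} [Fintype U] [DecidableEq U] [Fintype W] [DecidableEq W]
  {G : SimpleGraph W} {Γ : SimpleGraph U} [DecidableRel Γ.Adj] {S : Finset W} {T : Finset U}
  {f v u : U} {inj : U → W} {proj : W → U}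

theorem isCutSet (hs : GlueSide G S Γ f v T inj proj) (hf : Γ.degree f = 1) (hv : Γ.Adj f v)
    (hvu : Γ.Adj v u) (hu : Γ.degree u = 2) (hG : IsCutSet G S) : IsCutSet Γ T := by
  rw [isCutSet_iff] at hG ⊢
  intro j hj
  have hjf : j ≠ f := ne_of_mem_of_not_mem (Finset.mem_coe.2 hj) hs.leaf_notMem
  rcases eq_or_ne j v with rfl | hjv
  · exact hs.reconnects_hinge hf hv hvu hu hj hG
  · exact hs.reconnects_of_reconnects_inj hf hv hjf hjv (hG _ ((hs.inj_mem_iff j hjf).2 hj))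

end GlueSide

section Glue

variable {V₁ V₂ : Type*} {Γ1 : SimpleGraph V₁} {Γ2 : SimpleGraph V₂} {f1 v1 : V₁} {f2 v2 : V₂}

@[simp] lemma glueGraph_adj_inl_inl {a b : {x // x ≠ f1}} :
    (glueGraph Γ1 Γ2 f1 v1 f2 v2).Adj (.inl a) (.inl b) ↔ Γ1.Adj a b := by
  simpa [glueGraph, Γ1.adj_comm b.1] using fun h e => Γ1.ne_of_adj h (congrArg Subtype.val e)

@[simp] lemma glueGraph_adj_inr_inr {a b : {x // x ≠ f2 ∧ x ≠ v2}} :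
    (glueGraph Γ1 Γ2 f1 v1 f2 v2).Adj (.inr a) (.inr b) ↔ Γ2.Adj a b := by
  simpa [glueGraph, Γ2.adj_comm b.1] using fun h e => Γ2.ne_of_adj h (congrArg Subtype.val e)

@[simp] lemma glueGraph_adj_inl_inr {a : {x // x ≠ f1}} {b : {x // x ≠ f2 ∧ x ≠ v2}} :
    (glueGraph Γ1 Γ2 f1 v1 f2 v2).Adj (.inl a) (.inr b) ↔ a = v1 ∧ Γ2.Adj v2 b := by
  simp [glueGraph]

@[simp] lemma glueGraph_adj_inr_inl {a : {x // x ≠ f2 ∧ x ≠ v2}} {b : {x // x ≠ f1}} :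
    (glueGraph Γ1 Γ2 f1 v1 f2 v2).Adj (.inr a) (.inl b) ↔ b = v1 ∧ Γ2.Adj v2 a := by
  simp [glueGraph]

end Glue

namespace GlueV

variable {V₁ V₂ : Type*} {f1 v1 : V₁} {f2 v2 : V₂}

def ofLeft [DecidableEq V₁] (hne1 : v1 ≠ f1) (a : V₁) : GlueV f1 f2 v2 :=
  if h : a = f1 then .inl ⟨v1, hne1⟩ else .inl ⟨a, h⟩

def ofRight [DecidableEq V₂] (hne1 : v1 ≠ f1) (b : V₂) : GlueV f1 f2 v2 :=
  if h : b ≠ f2 ∧ b ≠ v2 then .inr ⟨b, h⟩ else .inl ⟨v1, hne1⟩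

/-- The leaf `f₁` stands in for the whole right side, so an edge from `v` into the right side
becomes the edge `v₁f₁`; `retractRight` works the same way. -/
def retractLeft : GlueV f1 f2 v2 → V₁ :=
  Sum.elim Subtype.val fun _ => f1

def retractRight [DecidableEq V₁] (v1 : V₁) : GlueV f1 f2 v2 → V₂ :=
  Sum.elim (fun a => if a.1 = v1 then v2 else f2) Subtype.val

@[simp] lemma retractLeft_inl (a : {x // x ≠ f1}) :
    retractLeft (.inl a : GlueV f1 f2 v2) = a := rfl

@[simp] lemma retractLeft_inr (b : {x // x ≠ f2 ∧ x ≠ v2}) :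
    retractLeft (.inr b : GlueV f1 f2 v2) = f1 := rfl

@[simp] lemma retractRight_inl [DecidableEq V₁] (a : {x // x ≠ f1}) :
    retractRight v1 (.inl a : GlueV f1 f2 v2) = if a.1 = v1 then v2 else f2 := rfl

@[simp] lemma retractRight_inr [DecidableEq V₁] (b : {x // x ≠ f2 ∧ x ≠ v2}) :
    retractRight v1 (.inr b : GlueV f1 f2 v2) = b := rfl

variable (hne1 : v1 ≠ f1)

@[simp] lemma ofLeft_of_ne [DecidableEq V₁] {a : V₁} (ha : a ≠ f1) :
    (ofLeft hne1 a : GlueV f1 f2 v2) = .inl ⟨a, ha⟩ := by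
  simp [ofLeft, ha]

@[simp] lemma ofRight_of_ne [DecidableEq V₂] {b : V₂} (hb : b ≠ f2 ∧ b ≠ v2) :
    (ofRight hne1 b : GlueV f1 f2 v2) = .inr ⟨b, hb⟩ := by
  simp [ofRight, hb]

@[simp] lemma ofRight_hinge [DecidableEq V₂] :
    (ofRight hne1 v2 : GlueV f1 f2 v2) = .inl ⟨v1, hne1⟩ := by
  simp [ofRight]

@[simp] lemma ofRight_leaf [DecidableEq V₂] :
    (ofRight hne1 f2 : GlueV f1 f2 v2) = .inl ⟨v1, hne1⟩ := by
  simp [ofRight]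

end GlueV

open GlueV

section GlueSides

variable {V₁ V₂ : Type*} [DecidableEq V₁] {Γ1 : SimpleGraph V₁} {Γ2 : SimpleGraph V₂}
  {f1 v1 : V₁} {f2 v2 : V₂} (hne1 : v1 ≠ f1) {S : Set (GlueV f1 f2 v2)}

lemma glueSide_left (ha1 : Γ1.Adj f1 v1) {T : Set V₁} (hfT : f1 ∉ T)
    (hT : ∀ a, a ≠ f1 → (ofLeft hne1 a ∈ S ↔ a ∈ T)) :
    GlueSide (glueGraph Γ1 Γ2 f1 v1 f2 v2) S Γ1 f1 v1 T (ofLeft hne1) retractLeft where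
  leaf_notMem := hfT
  inj_leaf := by simp [ofLeft, hne1]
  proj_inj a ha := by simp [ofLeft_of_ne hne1 ha]
  inj_mem_iff := hT
  adj_inj_iff a b ha hb := by simp [ofLeft, ha, hb]
  exists_inj_eq_of_adj j z hjf hjv hjz := by
    rcases z with c | c
    · exact ⟨c, c.2, ofLeft_of_ne hne1 c.2⟩
    · simp [ofLeft, hjf, hjv] at hjz
  reachable_proj z w h := by
    have hT' : ∀ a : {x // x ≠ f1}, .inl a ∉ S → a.1 ∉ T := fun a h =>
      (hT a a.2).not.1 (by rwa [ofLeft_of_ne hne1 a.2])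
    refine h.map_of_adj retractLeft fun z w hzw => ?_
    obtain ⟨hzw, hz, hw⟩ := hzw
    rcases z with a | a <;> rcases w with b | b
    · exact Adj.reachable ⟨by simpa using hzw, hT' a hz, hT' b hw⟩
    · obtain ⟨rfl, -⟩ : a.1 = v1 ∧ _ := by simpa using hzw
      exact Adj.reachable ⟨ha1.symm, hT' a hz, hfT⟩
    · obtain ⟨rfl, -⟩ : b.1 = v1 ∧ _ := by simpa using hzw
      exact Adj.reachable ⟨ha1, hfT, hT' b hw⟩
    · exact Reachable.refl _

lemma glueSide_right [DecidableEq V₂] (hne2 : v2 ≠ f2) (ha2 : Γ2.Adj f2 v2) {T : Set V₂}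
    (hfT : f2 ∉ T) (hT : ∀ b, b ≠ f2 → (ofRight hne1 b ∈ S ↔ b ∈ T)) :
    GlueSide (glueGraph Γ1 Γ2 f1 v1 f2 v2) S Γ2 f2 v2 T (ofRight hne1) (retractRight v1) where
  leaf_notMem := hfT
  inj_leaf := by simp
  proj_inj a ha := by
    by_cases hav : a = v2
    · simp [hav, retractRight]
    · simp [ofRight, ha, hav, retractRight]
  inj_mem_iff := hT
  adj_inj_iff a b ha hb := by
    by_cases hav : a = v2 <;> by_cases hbv : b = v2 <;>
      simp [ofRight, ha, hb, hav, hbv, Γ2.adj_comm v2]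
  exists_inj_eq_of_adj j z hjf hjv hjz := by
    rcases z with c | c
    · have hc : c.1 = v1 := by simp_all [ofRight]
      exact ⟨v2, hne2, by simp [← hc]⟩
    · exact ⟨c, c.2.1, ofRight_of_ne hne1 c.2⟩
  reachable_proj z w h := by
    have hT' : ∀ b : {x // x ≠ f2 ∧ x ≠ v2}, .inr b ∉ S → b.1 ∉ T := fun b h =>
      (hT b b.2.1).not.1 (by rwa [ofRight_of_ne hne1 b.2])
    have hv : ∀ a : {x // x ≠ f1}, a.1 = v1 → .inl a ∉ S → v2 ∉ T := fun a ha h =>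
      (hT v2 hne2).not.1 (by simpa [← ha] using h)
    refine h.map_of_adj (retractRight v1) fun z w hzw => ?_
    obtain ⟨hzw, hz, hw⟩ := hzw
    rcases z with a | a <;> rcases w with b | b
    · have hab : a.1 ≠ b.1 := Γ1.ne_of_adj (by simpa using hzw)
      by_cases hav : a.1 = v1
      · have hbv : b.1 ≠ v1 := hav ▸ hab.symm
        simpa [hav, hbv] using Adj.reachable (G := Γ2.isolate T) ⟨ha2.symm, hv a hav hz, hfT⟩
      by_cases hbv : b.1 = v1
      · simpa [hav, hbv] using Adj.reachable (G := Γ2.isolate T) ⟨ha2, hfT, hv b hbv hw⟩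
      · simp [hav, hbv]
    · obtain ⟨hav, hab⟩ : a.1 = v1 ∧ Γ2.Adj v2 b := by simpa using hzw
      simpa [hav] using Adj.reachable (G := Γ2.isolate T) ⟨hab, hv a hav hz, hT' b hw⟩
    · obtain ⟨hbv, hab⟩ : b.1 = v1 ∧ Γ2.Adj v2 a := by simpa using hzw
      simpa [hbv] using Adj.reachable (G := Γ2.isolate T) ⟨hab.symm, hT' a hz, hv b hbv hw⟩
    · exact Adj.reachable ⟨by simpa using hzw, hT' a hz, hT' b hw⟩

end GlueSides

section Parts

variable {V₁ V₂ : Type*} [DecidableEq V₁] {f1 v1 : V₁} {f2 v2 : V₂}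

@[simp] lemma mem_leftPart {S : Finset (GlueV f1 f2 v2)} {a : V₁} :
    a ∈ leftPart S ↔ ∃ h : a ≠ f1, .inl ⟨a, h⟩ ∈ S := by
  simp [leftPart]

variable [DecidableEq V₂]

lemma mem_rightPart {S : Finset (GlueV f1 f2 v2)} (hne1 : v1 ≠ f1) {b : V₂} :
    b ∈ rightPart v1 S ↔
      (∃ h : b ≠ f2 ∧ b ≠ v2, .inr ⟨b, h⟩ ∈ S) ∨ (b = v2 ∧ .inl ⟨v1, hne1⟩ ∈ S) := by
  simp only [rightPart, Finset.mem_biUnion]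
  grind

variable {S1 : Finset V₁} {S2 : Finset V₂} {hne1 : v1 ≠ f1}

@[simp] lemma inl_mem_liftLeft {a : {x // x ≠ f1}} :
    (.inl a : GlueV f1 f2 v2) ∈ liftLeft S1 ↔ a.1 ∈ S1 := by
  simp only [liftLeft, Finset.mem_biUnion]
  grind

@[simp] lemma inr_notMem_liftLeft {b : {x // x ≠ f2 ∧ x ≠ v2}} :
    (.inr b : GlueV f1 f2 v2) ∉ liftLeft S1 := by
  simp only [liftLeft, Finset.mem_biUnion]
  grind

@[simp] lemma inl_mem_liftRight {a : {x // x ≠ f1}} :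
    (.inl a : GlueV f1 f2 v2) ∈ liftRight hne1 S2 ↔ a.1 = v1 ∧ v2 ∈ S2 := by
  simp only [liftRight, Finset.mem_biUnion]
  grind

@[simp] lemma inr_mem_liftRight {b : {x // x ≠ f2 ∧ x ≠ v2}} :
    (.inr b : GlueV f1 f2 v2) ∈ liftRight hne1 S2 ↔ b.1 ∈ S2 := by
  simp only [liftRight, Finset.mem_biUnion]
  grind

end Parts

section GlueParts

variable {V₁ V₂ : Type*} [DecidableEq V₁] {Γ1 : SimpleGraph V₁} {Γ2 : SimpleGraph V₂}
  {f1 v1 : V₁} {f2 v2 : V₂} (hne1 : v1 ≠ f1)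

lemma glueSide_leftPart (ha1 : Γ1.Adj f1 v1) (S : Finset (GlueV f1 f2 v2)) :
    GlueSide (glueGraph Γ1 Γ2 f1 v1 f2 v2) S Γ1 f1 v1 (leftPart S) (ofLeft hne1) retractLeft :=
  glueSide_left hne1 ha1 (by simp) fun a ha => by simp [ha]

variable [DecidableEq V₂]

lemma glueSide_rightPart (hne2 : v2 ≠ f2) (ha2 : Γ2.Adj f2 v2) (S : Finset (GlueV f1 f2 v2)) :
    GlueSide (glueGraph Γ1 Γ2 f1 v1 f2 v2) S Γ2 f2 v2 (rightPart v1 S) (ofRight hne1)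
      (retractRight v1) := by
  refine glueSide_right hne1 hne2 ha2 (by simp [mem_rightPart hne1, hne2.symm]) fun b hb => ?_
  by_cases hbv : b = v2
  · simp [hbv, mem_rightPart hne1]
  · simp [mem_rightPart hne1, hb, hbv]

lemma eq_liftLeft_union_liftRight (S : Finset (GlueV f1 f2 v2)) :
    S = liftLeft (leftPart S) ∪ liftRight hne1 (rightPart v1 S) := by
  ext (⟨a, ha⟩ | ⟨b, hb⟩)
  · simp only [Finset.mem_union, inl_mem_liftLeft, inl_mem_liftRight, mem_leftPart,
      mem_rightPart hne1]
    grind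
  · simp [mem_rightPart hne1, hb]

lemma reconnects_glue_hinge [Γ1.LocallyFinite] (hne2 : v2 ≠ f2) (hl1 : Γ1.degree f1 = 1)
    (ha1 : Γ1.Adj f1 v1) {S : Set (GlueV f1 f2 v2)} {T1 : Set V₁} {T2 : Set V₂}
    (hs1 : GlueSide (glueGraph Γ1 Γ2 f1 v1 f2 v2) S Γ1 f1 v1 T1 (ofLeft hne1) retractLeft)
    (hs2 : GlueSide (glueGraph Γ1 Γ2 f1 v1 f2 v2) S Γ2 f2 v2 T2 (ofRight hne1) (retractRight v1))
    (hv1 : v1 ∈ T1) (h1 : Γ1.Reconnects T1 v1) (h2 : Γ2.Reconnects T2 v2) :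
    (glueGraph Γ1 Γ2 f1 v1 f2 v2).Reconnects S (.inl ⟨v1, hne1⟩) := by
  obtain ⟨x1, hvx1, hx1T, hx1f⟩ := h1.exists_adj_notMem_ne f1
  obtain ⟨x2, hvx2, hx2T, hx2f⟩ := h2.exists_adj_notMem_ne f2
  refine ⟨ofLeft hne1 x1, ofRight hne1 x2, (hs1.inj_mem_iff x1 hx1f).not.2 hx1T,
    (hs2.inj_mem_iff x2 hx2f).not.2 hx2T, ?_, ?_, fun hr => hx1f ?_⟩
  · simpa [hne1] using (hs1.adj_inj_iff v1 x1 hne1 hx1f).2 hvx1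
  · simpa using (hs2.adj_inj_iff v2 x2 hne2 hx2f).2 hvx2
  -- the retraction onto the left side sends `x₂` to the leaf `f₁`, isolated in `Γ₁ - T₁`
  have hr1 := hs1.reachable_proj _ _ hr
  rw [hs1.proj_inj x1 hx1f, ofRight_of_ne hne1 ⟨hx2f, hvx2.ne'⟩, retractLeft_inr] at hr1
  exact eq_of_reachable_isolate_of_degree_eq_one hl1 ha1 hv1 hr1

end GlueParts

section GlueCutSets

variable {V₁ V₂ : Type*} [Fintype V₁] [DecidableEq V₁] [Fintype V₂] [DecidableEq V₂]
  {Γ1 : SimpleGraph V₁} {Γ2 : SimpleGraph V₂} {f1 v1 : V₁} {f2 v2 : V₂}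

lemma isCutSet_leftPart [DecidableRel Γ1.Adj] (hne1 : v1 ≠ f1) (hl1 : Γ1.degree f1 = 1)
    (ha1 : Γ1.Adj f1 v1) {u1 : V₁} (hvu1 : Γ1.Adj v1 u1) (hu1 : Γ1.degree u1 = 2)
    {S : Finset (GlueV f1 f2 v2)} (hS : IsCutSet (glueGraph Γ1 Γ2 f1 v1 f2 v2) S) :
    IsCutSet Γ1 (leftPart S) :=
  (glueSide_leftPart hne1 ha1 S).isCutSet hl1 ha1 hvu1 hu1 hS

lemma isCutSet_rightPart [DecidableRel Γ2.Adj] (hne1 : v1 ≠ f1) (hne2 : v2 ≠ f2)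
    (hl2 : Γ2.degree f2 = 1) (ha2 : Γ2.Adj f2 v2) {u2 : V₂} (hvu2 : Γ2.Adj v2 u2)
    (hu2 : Γ2.degree u2 = 2) {S : Finset (GlueV f1 f2 v2)}
    (hS : IsCutSet (glueGraph Γ1 Γ2 f1 v1 f2 v2) S) : IsCutSet Γ2 (rightPart v1 S) :=
  (glueSide_rightPart hne1 hne2 ha2 S).isCutSet hl2 ha2 hvu2 hu2 hS

lemma isCutSet_liftLeft_union_liftRight [DecidableRel Γ1.Adj] [DecidableRel Γ2.Adj]
    (hne1 : v1 ≠ f1) (hne2 : v2 ≠ f2) (hl1 : Γ1.degree f1 = 1) (hl2 : Γ2.degree f2 = 1)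
    (ha1 : Γ1.Adj f1 v1) (ha2 : Γ2.Adj f2 v2) {S1 : Finset V₁} {S2 : Finset V₂}
    (h1 : IsCutSet Γ1 S1) (h2 : IsCutSet Γ2 S2) (hv : v1 ∈ S1 ↔ v2 ∈ S2) :
    IsCutSet (glueGraph Γ1 Γ2 f1 v1 f2 v2) (liftLeft S1 ∪ liftRight hne1 S2) := by
  set S : Finset (GlueV f1 f2 v2) := liftLeft S1 ∪ liftRight hne1 S2
  have hs1 : GlueSide (glueGraph Γ1 Γ2 f1 v1 f2 v2) S Γ1 f1 v1 S1 (ofLeft hne1) retractLeft :=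
    glueSide_left hne1 ha1 (notMem_of_isCutSet_of_degree_eq_one hl1 ha1 h1) fun a ha => by
      simpa [S, ofLeft_of_ne hne1 ha] using fun hav => hav ▸ hv.2
  have hs2 : GlueSide (glueGraph Γ1 Γ2 f1 v1 f2 v2) S Γ2 f2 v2 S2 (ofRight hne1)
      (retractRight v1) :=
    glueSide_right hne1 hne2 ha2 (notMem_of_isCutSet_of_degree_eq_one hl2 ha2 h2) fun b hb => by
      by_cases hbv : b = v2
      · simpa [S, hbv] using hv.1
      · simp [S, ofRight_of_ne hne1 ⟨hb, hbv⟩]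
  rw [isCutSet_iff] at h1 h2 ⊢
  rintro (⟨a, ha⟩ | ⟨b, hb⟩) hi
  · rw [← ofLeft_of_ne hne1 ha] at hi ⊢
    have haS1 : a ∈ S1 := (hs1.inj_mem_iff a ha).1 hi
    rcases eq_or_ne a v1 with rfl | hav
    · simpa [hne1] using
        reconnects_glue_hinge hne1 hne2 hl1 ha1 hs1 hs2 haS1 (h1 a haS1) (h2 v2 (hv.1 haS1))
    · exact hs1.reconnects_inj hl1 ha1 ha hav (h1 a haS1)
  · rw [← ofRight_of_ne hne1 hb] at hi ⊢
    exact hs2.reconnects_inj hl2 ha2 hb.1 hb.2 (h2 b ((hs2.inj_mem_iff b hb.1).1 hi))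

end GlueCutSets

theorem stmt11_general {V₁ V₂ : Type*} [Fintype V₁] [DecidableEq V₁] [Fintype V₂] [DecidableEq V₂]
    (Γ1 : SimpleGraph V₁) (Γ2 : SimpleGraph V₂)
    [DecidableRel Γ1.Adj] [DecidableRel Γ2.Adj]
    (f1 v1 : V₁) (f2 v2 : V₂)
    (hl1 : Γ1.degree f1 = 1) (hl2 : Γ2.degree f2 = 1)
    (ha1 : Γ1.Adj f1 v1) (ha2 : Γ2.Adj f2 v2)
    (hne1 : v1 ≠ f1) (hne2 : v2 ≠ f2)
    (hu1 : ∃ u1, Γ1.Adj v1 u1 ∧ Γ1.degree u1 = 2)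
    (hu2 : ∃ u2, Γ2.Adj v2 u2 ∧ Γ2.degree u2 = 2) :
    ∀ S : Finset (GlueV f1 f2 v2), IsCutSet (glueGraph Γ1 Γ2 f1 v1 f2 v2) S ↔
      ∃ (S1 : Finset V₁) (S2 : Finset V₂), IsCutSet Γ1 S1 ∧ IsCutSet Γ2 S2 ∧
        ((v1 ∉ S1 ∧ v2 ∉ S2) ∨ (v1 ∈ S1 ∧ v2 ∈ S2)) ∧
        S = liftLeft S1 ∪ liftRight hne1 S2 := by
  obtain ⟨u1, hvu1, hdu1⟩ := hu1
  obtain ⟨u2, hvu2, hdu2⟩ := hu2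
  intro S
  constructor
  · intro hS
    refine ⟨leftPart S, rightPart v1 S, isCutSet_leftPart hne1 hl1 ha1 hvu1 hdu1 hS,
      isCutSet_rightPart hne1 hne2 hl2 ha2 hvu2 hdu2 hS, ?_, eq_liftLeft_union_liftRight hne1 S⟩
    by_cases hv : (.inl ⟨v1, hne1⟩ : GlueV f1 f2 v2) ∈ S <;> simp [mem_rightPart hne1, hne1, hv]
  · rintro ⟨S1, S2, h1, h2, hv, rfl⟩
    exact isCutSet_liftLeft_union_liftRight hne1 hne2 hl1 hl2 ha1 ha2 h1 h2 (by tauto)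

theorem stmt11 {V₁ V₂ : Type*} [Fintype V₁] [DecidableEq V₁] [Fintype V₂] [DecidableEq V₂]
    (Γ1 : SimpleGraph V₁) (Γ2 : SimpleGraph V₂)
    [DecidableRel Γ1.Adj] [DecidableRel Γ2.Adj]
    (hconn1 : Γ1.Connected) (hconn2 : Γ2.Connected)
    (f1 v1 : V₁) (f2 v2 : V₂)
    (hl1 : Γ1.degree f1 = 1) (hl2 : Γ2.degree f2 = 1)
    (ha1 : Γ1.Adj f1 v1) (ha2 : Γ2.Adj f2 v2)
    (hd1 : 3 ≤ Γ1.degree v1) (hd2 : 3 ≤ Γ2.degree v2)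
    (hne1 : v1 ≠ f1) (hne2 : v2 ≠ f2)
    (hu1 : ∃ u1, Γ1.Adj v1 u1 ∧ Γ1.degree u1 = 2)
    (hu2 : ∃ u2, Γ2.Adj v2 u2 ∧ Γ2.degree u2 = 2) :
    ∀ S : Finset (GlueV f1 f2 v2), IsCutSet (glueGraph Γ1 Γ2 f1 v1 f2 v2) S ↔
      ∃ (S1 : Finset V₁) (S2 : Finset V₂), IsCutSet Γ1 S1 ∧ IsCutSet Γ2 S2 ∧
        ((v1 ∉ S1 ∧ v2 ∉ S2) ∨ (v1 ∈ S1 ∧ v2 ∈ S2)) ∧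
        S = liftLeft S1 ∪ liftRight hne1 S2 :=
  stmt11_general Γ1 Γ2 f1 v1 f2 v2 hl1 hl2 ha1 ha2 hne1 hne2 hu1 hu2
end
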